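/- arXiv:1506.04012 — 5 statements merged into one kernel-verified Lean document; each statement's English description precedes it below -/
import Mathlib

section
/- Let A be an n×n random complex matrix with arbitrary distribution. Let M ≥ 1 and ε, p₀, δ ∈ (0,1/2) with εn an integer. Assume that for every λ₀ ∈ ℂ with |λ₀| ≤ M√n and every set I ⊆ {1,…,n} with |I| = εn, one has P( s_min((A − λ₀·Id)_{I^c}) ≤ 8δM√n and ‖A‖ ≤ M√n ) ≤ p₀. Then the probability that simultaneously ‖A‖ ≤ M√n and there exist a unit eigenvector v of A and a set I ⊆ {1,…,n} with |I| = εn such that ‖v_I‖₂ < δ, is at most 5 δ^{-2} (e/ε)^{εn} p₀. -/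
open MeasureTheory ProbabilityTheory
open scoped ENNReal

noncomputable section

/-- The Euclidean norm of a finitely indexed vector with entries in `ℝ` or `ℂ`. -/
def eNorm {𝕜 : Type*} [RCLike 𝕜] {ι : Type*} [Fintype ι] (v : ι → 𝕜) : ℝ :=
  Real.sqrt (∑ i, ‖v i‖ ^ 2)

/-- Operator (spectral) norm of a matrix: `sup { ‖Ax‖₂ : ‖x‖₂ ≤ 1 }`. -/
def opNorm {𝕜 : Type*} [RCLike 𝕜] {m n : Type*} [Fintype m] [Fintype n]
    (A : Matrix m n 𝕜) : ℝ :=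
  sSup {r : ℝ | ∃ x : n → 𝕜, eNorm x ≤ 1 ∧ r = eNorm (A.mulVec x)}

/-- Smallest singular value of a matrix: `inf { ‖Ax‖₂ : ‖x‖₂ = 1 }`. -/
def sMin {𝕜 : Type*} [RCLike 𝕜] {m n : Type*} [Fintype m] [Fintype n]
    (A : Matrix m n 𝕜) : ℝ :=
  sInf {r : ℝ | ∃ x : n → 𝕜, eNorm x = 1 ∧ r = eNorm (A.mulVec x)}

/-- The submatrix of `A` consisting of the columns whose indices lie outside `I`. -/
def colsOutside {m n : ℕ} (A : Matrix (Fin m) (Fin n) ℂ) (I : Finset (Fin n)) :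
    Matrix (Fin m) {j : Fin n // j ∉ I} ℂ :=
  A.submatrix id fun j => (j : Fin n)

/-!
If `A v = λ v` with `‖v‖₂ = 1`, `‖v_I‖₂ < δ` and `‖A‖ ≤ M√n`, then `|λ| ≤ M√n`, so `λ` lies within
`4δM√n` of a point `λ₀` of a net of the disk of radius `M√n` with at most `5/δ²` points. Now
`(A - λ₀)_{I^c} v_{I^c} = (λ - λ₀) v - (A - λ₀) v_I` has norm at most `6δM√n`, while
`‖v_{I^c}‖₂ ≥ 3/4`, so `s_min((A - λ₀)_{I^c}) ≤ 8δM√n`. A union bound over the net and over the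
`C(n, εn) ≤ (e/ε)^{εn}` sets `I` gives the claim.
-/

section EuclideanNorm

variable {𝕜 : Type*} [RCLike 𝕜] {ι : Type*} [Fintype ι]

lemma eNorm_eq_norm_toLp (v : ι → 𝕜) : eNorm v = ‖WithLp.toLp 2 v‖ := by
  rw [EuclideanSpace.norm_eq]; rfl

lemma eNorm_nonneg (v : ι → 𝕜) : 0 ≤ eNorm v := Real.sqrt_nonneg _

lemma sq_eNorm (v : ι → 𝕜) : eNorm v ^ 2 = ∑ i, ‖v i‖ ^ 2 :=
  Real.sq_sqrt (Finset.sum_nonneg fun _ _ => sq_nonneg _)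

lemma eNorm_smul (c : 𝕜) (v : ι → 𝕜) : eNorm (c • v) = ‖c‖ * eNorm v := by
  simp only [eNorm_eq_norm_toLp, WithLp.toLp_smul, norm_smul]

lemma eNorm_sub_le (u v : ι → 𝕜) : eNorm (u - v) ≤ eNorm u + eNorm v := by
  simp only [eNorm_eq_norm_toLp, WithLp.toLp_sub]
  exact norm_sub_le _ _

lemma eNorm_piecewise_zero [DecidableEq ι] (I : Finset ι) (v : ι → 𝕜) :
    eNorm (I.piecewise v 0) = Real.sqrt (∑ i ∈ I, ‖v i‖ ^ 2) := by
  rw [eNorm]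
  congr 1
  simp only [Finset.piecewise, apply_ite (‖·‖ ^ 2), Pi.zero_apply, norm_zero, ne_eq,
    OfNat.ofNat_ne_zero, not_false_eq_true, zero_pow, Finset.sum_ite_mem, Finset.univ_inter]

lemma sq_eNorm_restrict_compl [DecidableEq ι] (I : Finset ι) (v : ι → 𝕜) :
    eNorm (fun j : {j // j ∉ I} => v j) ^ 2 = eNorm v ^ 2 - ∑ i ∈ I, ‖v i‖ ^ 2 := by
  rw [sq_eNorm, sq_eNorm, ← Finset.sum_add_sum_compl I,
    ← Finset.sum_subtype Iᶜ (fun _ => Finset.mem_compl) fun j => ‖v j‖ ^ 2]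
  ring

end EuclideanNorm

section OperatorNorm

open Matrix

variable {𝕜 : Type*} [RCLike 𝕜] {m n : Type*} [Fintype m] [Fintype n]

lemma opNorm_eq_norm_toLpLin [DecidableEq n] (A : Matrix m n 𝕜) :
    opNorm A = ‖LinearMap.toContinuousLinearMap (toLpLin 2 2 A)‖ := by
  rw [← ContinuousLinearMap.sSup_unitClosedBall_eq_norm, opNorm]
  congr 1
  ext r
  simp only [Set.mem_ofPred_eq, Set.mem_image, Metric.mem_closedBall, dist_zero_right,
    LinearMap.coe_toContinuousLinearMap', toLpLin_apply, ← eNorm_eq_norm_toLp]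
  constructor
  · rintro ⟨x, hx, rfl⟩
    exact ⟨WithLp.toLp 2 x, by rwa [← eNorm_eq_norm_toLp], rfl⟩
  · rintro ⟨x, hx, rfl⟩
    exact ⟨x.ofLp, by rwa [eNorm_eq_norm_toLp], rfl⟩

lemma eNorm_mulVec_le (A : Matrix m n 𝕜) (x : n → 𝕜) :
    eNorm (A *ᵥ x) ≤ opNorm A * eNorm x := by
  classical
  rw [opNorm_eq_norm_toLpLin, eNorm_eq_norm_toLp, eNorm_eq_norm_toLp]
  exact (LinearMap.toContinuousLinearMap (toLpLin 2 2 A)).le_opNorm (WithLp.toLp 2 x)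

lemma norm_le_opNorm_of_mulVec_eq_smul {A : Matrix n n 𝕜} {v : n → 𝕜} {lam : 𝕜}
    (hAv : A *ᵥ v = lam • v) (hv : eNorm v = 1) : ‖lam‖ ≤ opNorm A := by
  simpa only [hAv, eNorm_smul, hv, mul_one] using eNorm_mulVec_le A v

lemma sMin_nonneg (A : Matrix m n 𝕜) : 0 ≤ sMin A :=
  Real.sInf_nonneg fun _ ⟨_, _, hr⟩ => hr ▸ eNorm_nonneg _

lemma sMin_mul_eNorm_le (A : Matrix m n 𝕜) (x : n → 𝕜) :
    sMin A * eNorm x ≤ eNorm (A *ᵥ x) := by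
  rcases (eNorm_nonneg x).eq_or_lt with hx | hx
  · rw [← hx, mul_zero]; exact eNorm_nonneg _
  have hunit : eNorm (((eNorm x)⁻¹ : 𝕜) • x) = 1 := by
    rw [eNorm_smul, norm_inv, RCLike.norm_ofReal, abs_of_pos hx, inv_mul_cancel₀ hx.ne']
  have hle : sMin A ≤ eNorm (A *ᵥ (((eNorm x)⁻¹ : 𝕜) • x)) :=
    csInf_le ⟨0, fun _ ⟨_, _, hr⟩ => hr ▸ eNorm_nonneg _⟩ ⟨_, hunit, rfl⟩
  rw [Matrix.mulVec_smul, eNorm_smul, norm_inv, RCLike.norm_ofReal, abs_of_pos hx] at hle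
  rwa [← le_div_iff₀ hx, div_eq_inv_mul]

end OperatorNorm

section DiskNet

lemma exists_int_abs_le_floor_and_abs_mul_sub_le {δ x : ℝ} (hδ : 0 < δ) (hx : |x| ≤ 1 - 2 * δ) :
    ∃ a : ℤ, |a| ≤ ⌊1 / (2 * δ)⌋ ∧ |a * (2 * δ) - x| ≤ δ := by
  have hround := abs_sub_round (x / (2 * δ))
  refine ⟨round (x / (2 * δ)), Int.le_floor.2 ?_, ?_⟩
  · have hxδ : |x / (2 * δ)| ≤ 1 / (2 * δ) - 1 := by
      rw [abs_div, abs_of_pos (by positivity : (0 : ℝ) < 2 * δ), div_le_iff₀ (by positivity)]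
      field_simp
      linarith
    push_cast
    linarith [abs_sub_abs_le_abs_sub (round (x / (2 * δ)) : ℝ) (x / (2 * δ)),
      abs_sub_comm (x / (2 * δ)) (round (x / (2 * δ)) : ℝ)]
  · have : (round (x / (2 * δ)) : ℝ) * (2 * δ) - x =
        -(2 * δ) * (x / (2 * δ) - round (x / (2 * δ))) := by
      field_simp
      ring
    rw [this, abs_mul, abs_neg, abs_of_pos (by positivity)]
    nlinarith

lemma exists_finset_unit_disk_net {δ : ℝ} (hδ0 : 0 < δ) (hδ2 : δ < 1 / 2) :
    ∃ S : Finset ℂ, (S.card : ℝ) ≤ 5 / δ ^ 2 ∧ (∀ μ ∈ S, ‖μ‖ ≤ 1) ∧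
      ∀ z : ℂ, ‖z‖ ≤ 1 → ∃ μ ∈ S, ‖z - μ‖ ≤ 4 * δ := by
  set N := ⌊1 / (2 * δ)⌋
  let grid : ℤ × ℤ → ℂ := fun p => ⟨p.1 * (2 * δ), p.2 * (2 * δ)⟩
  refine ⟨((Finset.Icc (-N) N ×ˢ Finset.Icc (-N) N).image grid).filter (‖·‖ ≤ 1), ?_,
    fun μ hμ => (Finset.mem_filter.1 hμ).2, fun z hz => ?_⟩
  · have hN : (N : ℝ) ≤ 1 / (2 * δ) := Int.floor_le _
    have hN0 : 0 ≤ N := Int.floor_nonneg.2 (by positivity)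
    have hcard : ((Finset.Icc (-N) N).card : ℝ) = 2 * N + 1 := by
      have : ((Finset.Icc (-N) N).card : ℤ) = 2 * N + 1 := by rw [Int.card_Icc]; omega
      exact_mod_cast this
    calc (((Finset.Icc (-N) N ×ˢ Finset.Icc (-N) N).image grid).filter (‖·‖ ≤ 1)).card
        ≤ ((Finset.Icc (-N) N).card : ℝ) ^ 2 := by
          rw [sq, ← Nat.cast_mul, ← Finset.card_product]
          exact_mod_cast (Finset.card_filter_le _ _).trans Finset.card_image_le
      _ ≤ (1 / δ + 1) ^ 2 := by
          rw [hcard]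
          gcongr
          linarith [show 2 * (1 / (2 * δ)) = 1 / δ by field_simp]
      _ ≤ 5 / δ ^ 2 := by
          have h2 : 2 < 1 / δ := by rw [lt_div_iff₀ hδ0]; linarith
          rw [show 5 / δ ^ 2 = 5 * (1 / δ) ^ 2 by field_simp]
          nlinarith
  · -- Shrinking `z` first keeps the nearby grid point inside the unit disk.
    set z' : ℂ := ((1 - 2 * δ : ℝ) : ℂ) * z
    have hz' : ‖z'‖ ≤ 1 - 2 * δ := by
      rw [norm_mul, Complex.norm_real, Real.norm_of_nonneg (by linarith)]
      exact mul_le_of_le_one_right (by linarith) hz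
    obtain ⟨a, haN, ha⟩ := exists_int_abs_le_floor_and_abs_mul_sub_le hδ0
      ((Complex.abs_re_le_norm z').trans hz')
    obtain ⟨b, hbN, hb⟩ := exists_int_abs_le_floor_and_abs_mul_sub_le hδ0
      ((Complex.abs_im_le_norm z').trans hz')
    have hgrid : ‖grid (a, b) - z'‖ ≤ 2 * δ := by
      refine (Complex.norm_le_abs_re_add_abs_im _).trans ?_
      simp only [Complex.sub_re, Complex.sub_im, grid]
      linarith
    have hzz' : ‖z - z'‖ ≤ 2 * δ := by
      rw [show z - z' = ((2 * δ : ℝ) : ℂ) * z by simp only [z']; push_cast; ring, norm_mul,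
        Complex.norm_real, Real.norm_of_nonneg (by positivity)]
      exact mul_le_of_le_one_right (by positivity) hz
    refine ⟨grid (a, b), Finset.mem_filter.2 ⟨Finset.mem_image.2 ⟨(a, b), ?_, rfl⟩, ?_⟩, ?_⟩
    · simp only [Finset.mem_product, Finset.mem_Icc]
      exact ⟨abs_le.1 haN, abs_le.1 hbN⟩
    · calc ‖grid (a, b)‖ ≤ ‖z'‖ + ‖grid (a, b) - z'‖ := norm_le_insert' _ _
        _ ≤ 1 := by linarith
    · calc ‖z - grid (a, b)‖ ≤ ‖z - z'‖ + ‖grid (a, b) - z'‖ := by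
            rw [norm_sub_rev (grid (a, b))]; exact norm_sub_le_norm_sub_add_norm_sub z z' _
        _ ≤ 4 * δ := by linarith

lemma exists_finset_disk_net {δ : ℝ} (hδ0 : 0 < δ) (hδ2 : δ < 1 / 2) (R : ℝ) :
    ∃ S : Finset ℂ, (S.card : ℝ) ≤ 5 / δ ^ 2 ∧ (∀ μ ∈ S, ‖μ‖ ≤ R) ∧
      ∀ z : ℂ, ‖z‖ ≤ R → ∃ μ ∈ S, ‖z - μ‖ ≤ 4 * δ * R := by
  rcases lt_or_ge R 0 with hR | hR
  · exact ⟨∅, by simp only [Finset.card_empty, Nat.cast_zero]; positivity, by simp,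
      fun z hz => absurd (norm_nonneg z) (by linarith)⟩
  obtain ⟨S, hScard, hS, hSnet⟩ := exists_finset_unit_disk_net hδ0 hδ2
  refine ⟨S.image ((R : ℂ) * ·), (Nat.cast_le.2 Finset.card_image_le).trans hScard, ?_,
    fun z hz => ?_⟩
  · simp only [Finset.mem_image, forall_exists_index, and_imp, forall_apply_eq_imp_iff₂,
      norm_mul, Complex.norm_real, Real.norm_of_nonneg hR]
    exact fun μ hμ => mul_le_of_le_one_right hR (hS μ hμ)
  have hzR : (R : ℂ) * (z / R) = z := by
    rcases hR.eq_or_lt with rfl | hR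
    · simp [norm_le_zero_iff.1 hz]
    · rw [mul_div_cancel₀ z (Complex.ofReal_ne_zero.2 hR.ne')]
  obtain ⟨μ, hμS, hμ⟩ := hSnet (z / R) (by
    rw [norm_div, Complex.norm_real, Real.norm_of_nonneg hR]; exact div_le_one_of_le₀ hz hR)
  refine ⟨R * μ, Finset.mem_image_of_mem _ hμS, ?_⟩
  rw [← hzR, ← mul_sub, norm_mul, Complex.norm_real, Real.norm_of_nonneg hR]
  nlinarith

end DiskNet

lemma choose_le_exp_one_mul_div_pow (n k : ℕ) :
    (n.choose k : ℝ) ≤ (Real.exp 1 * n / k) ^ k := by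
  rcases k.eq_zero_or_pos with rfl | hk
  · simp
  have hkR : (0 : ℝ) < k := Nat.cast_pos.2 hk
  have hfac : (k : ℝ) ^ k / k.factorial ≤ Real.exp 1 ^ k := by
    rw [← Real.exp_nat_mul, mul_one]
    exact Real.pow_div_factorial_le_exp _ hkR.le k
  calc (n.choose k : ℝ) ≤ (n : ℝ) ^ k / k.factorial := Nat.choose_le_pow_div k n
    _ = (n / k : ℝ) ^ k * ((k : ℝ) ^ k / k.factorial) := by
        rw [div_pow]; field_simp
    _ ≤ (n / k : ℝ) ^ k * Real.exp 1 ^ k := by gcongr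
    _ = (Real.exp 1 * n / k) ^ k := by rw [← mul_pow, mul_div_assoc, mul_comm]

lemma choose_le_exp_one_div_rpow {n k : ℕ} {ε : ℝ} (hk : (k : ℝ) = ε * n) :
    (n.choose k : ℝ) ≤ (Real.exp 1 / ε) ^ (ε * n) := by
  rw [← hk, Real.rpow_natCast]
  rcases k.eq_zero_or_pos with rfl | hk0
  · simp
  have hn : (n : ℝ) ≠ 0 := by
    rintro hn
    rw [hn, mul_zero, Nat.cast_eq_zero] at hk
    omega
  convert choose_le_exp_one_mul_div_pow n k using 2
  rw [hk, mul_div_mul_right _ _ hn]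

section Submatrix

open Matrix

variable {m n : ℕ}

lemma colsOutside_mulVec (B : Matrix (Fin m) (Fin n) ℂ) (I : Finset (Fin n)) (v : Fin n → ℂ) :
    colsOutside B I *ᵥ (fun j => v j) = B *ᵥ v - B *ᵥ I.piecewise v 0 := by
  ext i
  simp only [mulVec, dotProduct, colsOutside, submatrix_apply, id, Pi.sub_apply,
    Finset.piecewise, Pi.zero_apply, mul_ite, mul_zero, Finset.sum_ite_mem, Finset.univ_inter]
  rw [← Finset.sum_add_sum_compl I, add_sub_cancel_left]
  exact (Finset.sum_subtype Iᶜ (fun _ => Finset.mem_compl) fun j => B i j * v j).symm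

lemma sMin_colsOutside_sub_smul_le {A : Matrix (Fin n) (Fin n) ℂ} {v : Fin n → ℂ} {lam μ : ℂ}
    {I : Finset (Fin n)} {R δ : ℝ} (hAv : A *ᵥ v = lam • v) (hv : eNorm v = 1)
    (hvI : Real.sqrt (∑ i ∈ I, ‖v i‖ ^ 2) < δ) (hδ : δ ≤ 1 / 2) (hA : opNorm A ≤ R)
    (hμ : ‖μ‖ ≤ R) (hlam : ‖lam - μ‖ ≤ 4 * δ * R) :
    sMin (colsOutside (A - μ • 1) I) ≤ 8 * δ * R := by
  set u := I.piecewise v 0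
  set w : {j // j ∉ I} → ℂ := fun j => v j
  have hR : 0 ≤ R := (norm_nonneg μ).trans hμ
  have hu : eNorm u ≤ δ := (eNorm_piecewise_zero I v).le.trans hvI.le
  have hw : 3 / 4 ≤ eNorm w := by
    have hw2 := sq_eNorm_restrict_compl I v
    rw [hv, ← Real.sq_sqrt (Finset.sum_nonneg fun i _ => sq_nonneg ‖v i‖)] at hw2
    nlinarith [eNorm_nonneg w, Real.sqrt_nonneg (∑ i ∈ I, ‖v i‖ ^ 2)]
  have hBu : eNorm ((A - μ • 1) *ᵥ u) ≤ 2 * δ * R := by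
    rw [sub_mulVec, smul_mulVec, one_mulVec]
    calc eNorm (A *ᵥ u - μ • u) ≤ opNorm A * eNorm u + ‖μ‖ * eNorm u :=
          (eNorm_sub_le _ _).trans (add_le_add (eNorm_mulVec_le A u) (eNorm_smul μ u).le)
      _ ≤ R * δ + R * δ := by gcongr <;> exact eNorm_nonneg u
      _ = 2 * δ * R := by ring
  have hBv : (A - μ • 1) *ᵥ v = (lam - μ) • v := by
    rw [sub_mulVec, smul_mulVec, one_mulVec, hAv, sub_smul]
  have hBw : eNorm (colsOutside (A - μ • 1) I *ᵥ w) ≤ 6 * δ * R := by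
    rw [colsOutside_mulVec, hBv]
    calc eNorm ((lam - μ) • v - (A - μ • 1) *ᵥ u) ≤ ‖lam - μ‖ * 1 + 2 * δ * R := by
          rw [← hv, ← eNorm_smul]; exact (eNorm_sub_le _ _).trans (add_le_add le_rfl hBu)
      _ ≤ 6 * δ * R := by linarith
  nlinarith [sMin_mul_eNorm_le (colsOutside (A - μ • 1) I) w,
    sMin_nonneg (colsOutside (A - μ • 1) I)]

end Submatrix

lemma measure_le_card_mul_of_subset_biUnion {α Ω : Type*} [MeasurableSpace Ω] (P : Measure Ω)
    {s : Set Ω} {S : Finset α} {E : α → Set Ω} {c : ℝ≥0∞} (hs : s ⊆ ⋃ a ∈ S, E a)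
    (hE : ∀ a ∈ S, P (E a) ≤ c) : P s ≤ S.card * c :=
  calc P s ≤ P (⋃ a ∈ S, E a) := measure_mono hs
    _ ≤ ∑ a ∈ S, P (E a) := measure_biUnion_finset_le S E
    _ ≤ ∑ _a ∈ S, c := Finset.sum_le_sum hE
    _ = S.card * c := by rw [Finset.sum_const, nsmul_eq_mul]

theorem reduction_delocalization_to_invertibility_general
    (n : ℕ) (Ω : Type) [MeasurableSpace Ω] (P : Measure Ω)
    (A : Ω → Matrix (Fin n) (Fin n) ℂ) (M ε p₀ δ : ℝ) (k : ℕ)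
    (hδ : 0 < δ ∧ δ < 1 / 2) (hk : (k : ℝ) = ε * n)
    (hinv : ∀ lam : ℂ, ‖lam‖ ≤ M * Real.sqrt n → ∀ I : Finset (Fin n), I.card = k →
      P {ω | sMin (colsOutside (A ω - lam • (1 : Matrix (Fin n) (Fin n) ℂ)) I) ≤
            8 * δ * M * Real.sqrt n ∧ opNorm (A ω) ≤ M * Real.sqrt n} ≤
        ENNReal.ofReal p₀) :
    P {ω | opNorm (A ω) ≤ M * Real.sqrt n ∧
        ∃ v : Fin n → ℂ, (∃ lam : ℂ, (A ω).mulVec v = lam • v) ∧ eNorm v = 1 ∧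
          ∃ I : Finset (Fin n), I.card = k ∧ Real.sqrt (∑ i ∈ I, ‖v i‖ ^ 2) < δ} ≤
      ENNReal.ofReal (5 / δ ^ 2 * (Real.exp 1 / ε) ^ (ε * n) * p₀) := by
  obtain ⟨S, hScard, hSR, hSnet⟩ := exists_finset_disk_net hδ.1 hδ.2 (M * Real.sqrt n)
  set T := Finset.powersetCard k (Finset.univ : Finset (Fin n))
  have hcard : ((S ×ˢ T).card : ℝ) ≤ 5 / δ ^ 2 * (Real.exp 1 / ε) ^ (ε * n) := by
    rw [Finset.card_product, Finset.card_powersetCard, Finset.card_univ, Fintype.card_fin,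
      Nat.cast_mul]
    exact mul_le_mul hScard (choose_le_exp_one_div_rpow hk) (Nat.cast_nonneg _)
      (by positivity)
  refine (measure_le_card_mul_of_subset_biUnion P (S := S ×ˢ T) (c := ENNReal.ofReal p₀)
    (E := fun q => {ω | sMin (colsOutside (A ω - q.1 • 1) q.2) ≤ 8 * δ * M * Real.sqrt n ∧
      opNorm (A ω) ≤ M * Real.sqrt n}) ?_ ?_).trans ?_
  · rintro ω ⟨hA, v, ⟨lam, hAv⟩, hv, I, hI, hvI⟩
    obtain ⟨μ, hμS, hlamμ⟩ := hSnet lam ((norm_le_opNorm_of_mulVec_eq_smul hAv hv).trans hA)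
    refine Set.mem_biUnion (x := (μ, I))
      (Finset.mem_product.2 ⟨hμS, Finset.mem_powersetCard_univ.2 hI⟩) ⟨?_, hA⟩
    have := sMin_colsOutside_sub_smul_le hAv hv hvI hδ.2.le hA (hSR μ hμS) hlamμ
    linarith
  · rintro ⟨μ, I⟩ hq
    rw [Finset.mem_product, Finset.mem_powersetCard_univ] at hq
    exact hinv μ (hSR μ hq.1) I hq.2
  · rw [ENNReal.ofReal_mul ((Nat.cast_nonneg _).trans hcard), ← ENNReal.ofReal_natCast]
    gcongr

/-- **Reduction of delocalization to invertibility** (Rudelson–Vershynin, Proposition 4.1). -/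
theorem reduction_delocalization_to_invertibility
    (n : ℕ) (Ω : Type) [MeasurableSpace Ω] (P : Measure Ω) [IsProbabilityMeasure P]
    (A : Ω → Matrix (Fin n) (Fin n) ℂ) (M ε p₀ δ : ℝ) (k : ℕ)
    (hM : 1 ≤ M) (hε : 0 < ε ∧ ε < 1 / 2) (hp₀ : 0 < p₀ ∧ p₀ < 1 / 2)
    (hδ : 0 < δ ∧ δ < 1 / 2) (hk : (k : ℝ) = ε * n)
    (hinv : ∀ lam : ℂ, ‖lam‖ ≤ M * Real.sqrt n → ∀ I : Finset (Fin n), I.card = k →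
      P {ω | sMin (colsOutside (A ω - lam • (1 : Matrix (Fin n) (Fin n) ℂ)) I) ≤
            8 * δ * M * Real.sqrt n ∧ opNorm (A ω) ≤ M * Real.sqrt n} ≤
        ENNReal.ofReal p₀) :
    P {ω | opNorm (A ω) ≤ M * Real.sqrt n ∧
        ∃ v : Fin n → ℂ, (∃ lam : ℂ, (A ω).mulVec v = lam • v) ∧ eNorm v = 1 ∧
          ∃ I : Finset (Fin n), I.card = k ∧ Real.sqrt (∑ i ∈ I, ‖v i‖ ^ 2) < δ} ≤
      ENNReal.ofReal (5 / δ ^ 2 * (Real.exp 1 / ε) ^ (ε * n) * p₀) :=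
  reduction_delocalization_to_invertibility_general n Ω P A M ε p₀ δ k hδ hk hinv
end
end

section
/- There is an absolute constant C such that the following holds. Let Z = (Z₁,…,Z_n) be a random vector in ℂ^n with independent coordinates, and suppose there exist numbers t₀, M ≥ 0 such that L(Z_j, t) ≤ M(t + t₀) for every j ∈ {1,…,n} and every t ≥ 0. Then L(Z, t√n) ≤ [C M (t + t₀)]^n for every t ≥ 0. -/
open MeasureTheory ProbabilityTheory
open scoped ENNReal

noncomputable section

/-- The Lévy concentration function of a random variable with values in a normed group:
`L(Z, t) = sup_u P(‖Z - u‖ ≤ t)`. -/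
def concFn {Ω : Type*} [MeasurableSpace Ω] {E : Type*} [SeminormedAddGroup E]
    (P : Measure Ω) (Z : Ω → E) (t : ℝ) : ℝ≥0∞ :=
  ⨆ u : E, P {ω | ‖Z ω - u‖ ≤ t}

/-- The Lévy concentration function of a finitely indexed random vector with respect to the
Euclidean norm: `L(Z, t) = sup_u P(‖Z - u‖₂ ≤ t)`. -/
def concFnE {Ω : Type*} [MeasurableSpace Ω] {𝕜 : Type*} [RCLike 𝕜] {ι : Type*} [Fintype ι]
    (P : Measure Ω) (Z : Ω → ι → 𝕜) (t : ℝ) : ℝ≥0∞ :=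
  ⨆ u : ι → 𝕜, P {ω | eNorm (fun i => Z ω i - u i) ≤ t}

/-!
For a fixed centre `u`, Markov's inequality gives
`P(‖Z - u‖² ≤ n t²) ≤ eⁿ · E exp(-‖Z - u‖² / t²)`, and by independence the expectation factors
into `∏ⱼ E exp(-|Zⱼ - uⱼ|² / t²)`. Slicing `|Zⱼ - uⱼ|² / t²` into the ranges `[k, k + 1)` bounds
each factor by `∑ₖ e⁻ᵏ P(|Zⱼ - uⱼ| ≤ √(k + 1) t) ≤ ∑ₖ (k + 1) e⁻ᵏ M (t + t₀) ≤ 4 M (t + t₀)`,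
so `C = 4e` works for `t > 0`. The case `t = 0` follows by monotonicity of the concentration
function and continuity of the bound in `t`.
-/

open Filter Topology Real

lemma tsum_ofReal_succ_mul_exp_neg_one_pow_le :
    ∑' k : ℕ, ENNReal.ofReal (((k : ℝ) + 1) * exp (-1) ^ k) ≤ 4 := by
  have hr : ‖exp (-1)‖ < 1 := by
    rw [Real.norm_of_nonneg (exp_pos _).le, exp_lt_one_iff]; norm_num
  have hsum : HasSum (fun k : ℕ => ((k : ℝ) + 1) * exp (-1) ^ k) (1 / (1 - exp (-1)) ^ 2) := by
    simpa using hasSum_choose_mul_geometric_of_norm_lt_one 1 hr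
  rw [← ENNReal.ofReal_tsum_of_nonneg (fun k => by positivity) hsum.summable, hsum.tsum_eq,
    ← ENNReal.ofReal_ofNat 4]
  refine ENNReal.ofReal_le_ofReal ?_
  have hhalf : exp (-1) ≤ 1 / 2 := by
    rw [exp_neg, inv_le_comm₀ (exp_pos 1) (by norm_num)]
    linarith [add_one_le_exp (1 : ℝ)]
  rw [div_le_iff₀ (by nlinarith [exp_pos (-1)])]
  nlinarith

lemma ofReal_exp_neg_le_tsum_indicator {x : ℝ} (hx : 0 ≤ x) :
    ENNReal.ofReal (exp (-x)) ≤
      ∑' k : ℕ, (Set.Iic ((k : ℝ) + 1)).indicator (fun _ => ENNReal.ofReal (exp (-1) ^ k)) x := by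
  refine le_trans ?_ (ENNReal.le_tsum ⌊x⌋₊)
  rw [Set.indicator_of_mem (show x ∈ Set.Iic _ from (Nat.lt_floor_add_one x).le), ← exp_nat_mul,
    mul_neg_one]
  exact ENNReal.ofReal_le_ofReal (exp_le_exp.2 (neg_le_neg (Nat.floor_le hx)))

section

variable {Ω : Type*} [MeasurableSpace Ω] {μ : Measure Ω}

lemma lintegral_exp_neg_le_tsum {X : Ω → ℝ} (hX : Measurable X) (hX0 : ∀ ω, 0 ≤ X ω) :
    ∫⁻ ω, ENNReal.ofReal (exp (-X ω)) ∂μ ≤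
      ∑' k : ℕ, ENNReal.ofReal (exp (-1) ^ k) * μ {ω | X ω ≤ k + 1} :=
  calc ∫⁻ ω, ENNReal.ofReal (exp (-X ω)) ∂μ
      ≤ ∫⁻ ω, ∑' k : ℕ,
          (Set.Iic ((k : ℝ) + 1)).indicator (fun _ => ENNReal.ofReal (exp (-1) ^ k)) (X ω) ∂μ :=
        lintegral_mono fun ω => ofReal_exp_neg_le_tsum_indicator (hX0 ω)
    _ = ∑' k : ℕ, ENNReal.ofReal (exp (-1) ^ k) * μ {ω | X ω ≤ k + 1} := by
        refine (lintegral_tsum fun k =>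
          ((measurable_const.indicator measurableSet_Iic).comp hX).aemeasurable).trans ?_
        exact tsum_congr fun k => lintegral_indicator_const_comp hX measurableSet_Iic _

lemma lintegral_exp_neg_le_of_measure_le {X : Ω → ℝ} (hX : Measurable X) (hX0 : ∀ ω, 0 ≤ X ω)
    {a : ℝ} (h : ∀ k : ℕ, μ {ω | X ω ≤ k + 1} ≤ ENNReal.ofReal ((k + 1) * a)) :
    ∫⁻ ω, ENNReal.ofReal (exp (-X ω)) ∂μ ≤ ENNReal.ofReal (4 * a) :=
  calc ∫⁻ ω, ENNReal.ofReal (exp (-X ω)) ∂μ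
      ≤ ∑' k : ℕ, ENNReal.ofReal (exp (-1) ^ k) * μ {ω | X ω ≤ k + 1} :=
        lintegral_exp_neg_le_tsum hX hX0
    _ ≤ ∑' k : ℕ, ENNReal.ofReal (exp (-1) ^ k) * ENNReal.ofReal ((k + 1) * a) := by
        gcongr with k; exact h k
    _ = (∑' k : ℕ, ENNReal.ofReal (((k : ℝ) + 1) * exp (-1) ^ k)) * ENNReal.ofReal a := by
        rw [← ENNReal.tsum_mul_right]
        refine tsum_congr fun k => ?_
        rw [← ENNReal.ofReal_mul (by positivity), ← ENNReal.ofReal_mul (by positivity)]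
        ring_nf
    _ ≤ 4 * ENNReal.ofReal a := by gcongr; exact tsum_ofReal_succ_mul_exp_neg_one_pow_le
    _ = ENNReal.ofReal (4 * a) := by rw [ENNReal.ofReal_mul (by norm_num)]; simp

variable {E : Type*} [SeminormedAddCommGroup E]

lemma measure_norm_sub_sq_div_le_concFn (Y : Ω → E) (u : E) {t c : ℝ} (ht : 0 < t) :
    μ {ω | ‖Y ω - u‖ ^ 2 / t ^ 2 ≤ c} ≤ concFn μ Y (√c * t) := by
  refine le_trans (measure_mono fun ω hω => ?_) (le_iSup (fun v => μ {ω | ‖Y ω - v‖ ≤ √c * t}) u)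
  have hω : (‖Y ω - u‖ / t) ^ 2 ≤ c := by rwa [div_pow]
  have := abs_le_sqrt hω
  rwa [abs_of_nonneg (by positivity), div_le_iff₀ ht] at this

lemma lintegral_exp_neg_norm_sub_sq_div_le [MeasurableSpace E] [OpensMeasurableSpace E]
    {Y : Ω → E} (hY : Measurable Y) (u : E) {t₀ M : ℝ} (ht₀ : 0 ≤ t₀) (hM : 0 ≤ M)
    (hconc : ∀ s, 0 ≤ s → concFn μ Y s ≤ ENNReal.ofReal (M * (s + t₀))) {t : ℝ} (ht : 0 < t) :
    ∫⁻ ω, ENNReal.ofReal (exp (-(‖Y ω - u‖ ^ 2 / t ^ 2))) ∂μ ≤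
      ENNReal.ofReal (4 * (M * (t + t₀))) := by
  have hX : Measurable fun ω => ‖Y ω - u‖ ^ 2 / t ^ 2 :=
    (((continuous_sub_right u).norm.pow 2).div_const _).measurable.comp hY
  refine lintegral_exp_neg_le_of_measure_le hX (fun ω => by positivity) fun k => ?_
  have hk : (1 : ℝ) ≤ k + 1 := by simp
  have hsqrt : √((k : ℝ) + 1) ≤ k + 1 := Real.sqrt_le_self_iff.2 (Or.inr hk)
  calc μ {ω | ‖Y ω - u‖ ^ 2 / t ^ 2 ≤ k + 1}
      ≤ concFn μ Y (√((k : ℝ) + 1) * t) := measure_norm_sub_sq_div_le_concFn Y u ht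
    _ ≤ ENNReal.ofReal (M * (√((k : ℝ) + 1) * t + t₀)) := hconc _ (by positivity)
    _ ≤ ENNReal.ofReal ((k + 1) * (M * (t + t₀))) := by
        refine ENNReal.ofReal_le_ofReal ?_
        have : √((k : ℝ) + 1) * t + t₀ ≤ (k + 1) * (t + t₀) := by nlinarith
        nlinarith

end

section

variable {Ω : Type*} [MeasurableSpace Ω] {P : Measure Ω} {𝕜 : Type*} [RCLike 𝕜]
  {ι : Type*} [Fintype ι] {Z : Ω → ι → 𝕜}

lemma measure_eNorm_sub_le_prod_lintegral (hZ : ∀ j, Measurable fun ω => Z ω j)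
    (hindep : iIndepFun (fun j ω => Z ω j) P) (u : ι → 𝕜) {t : ℝ} (ht : 0 < t) :
    P {ω | eNorm (fun i => Z ω i - u i) ≤ t * √(Fintype.card ι)} ≤
      ENNReal.ofReal (exp 1) ^ Fintype.card ι *
        ∏ j, ∫⁻ ω, ENNReal.ofReal (exp (-(‖Z ω j - u j‖ ^ 2 / t ^ 2))) ∂P := by
  set n := Fintype.card ι
  set g : ι → 𝕜 → ℝ≥0∞ := fun j z => ENNReal.ofReal (exp (-(‖z - u j‖ ^ 2 / t ^ 2)))
  have hg : ∀ j, Measurable (g j) := fun j => by fun_prop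
  have hsub : {ω | eNorm (fun i => Z ω i - u i) ≤ t * √n} ⊆
      {ω | ENNReal.ofReal (exp (-n)) ≤ ∏ j, g j (Z ω j)} := by
    intro ω hω
    have hsum : ∑ j, ‖Z ω j - u j‖ ^ 2 / t ^ 2 ≤ n := by
      rw [← Finset.sum_div, div_le_iff₀ (by positivity)]
      have := (Real.sqrt_le_left (by positivity)).1 hω
      rwa [mul_pow, Real.sq_sqrt (by positivity), mul_comm] at this
    simp only [Set.mem_ofPred_eq, g]
    rw [← ENNReal.ofReal_prod_of_nonneg fun j _ => (exp_pos _).le, ← exp_sum,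
      Finset.sum_neg_distrib]
    exact ENNReal.ofReal_le_ofReal (exp_le_exp.2 (neg_le_neg hsum))
  calc P {ω | eNorm (fun i => Z ω i - u i) ≤ t * √n}
      ≤ P {ω | ENNReal.ofReal (exp (-n)) ≤ ∏ j, g j (Z ω j)} := measure_mono hsub
    _ ≤ (∫⁻ ω, ∏ j, g j (Z ω j) ∂P) / ENNReal.ofReal (exp (-n)) :=
        meas_ge_le_lintegral_div (by fun_prop) (by simp [exp_pos]) ENNReal.ofReal_ne_top
    _ = ENNReal.ofReal (exp 1) ^ n * ∏ j, ∫⁻ ω, g j (Z ω j) ∂P := by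
        rw [lintegral_prod_eq_prod_lintegral_of_indepFun _ (fun j ω => g j (Z ω j))
          (hindep.comp g hg) fun j => (hg j).comp (hZ j), div_eq_mul_inv, mul_comm, ← ENNReal.ofReal_inv_of_pos
          (exp_pos _), ← exp_neg, neg_neg, ← ENNReal.ofReal_pow (exp_pos _).le, ← exp_nat_mul,
          mul_one]

lemma concFnE_mono (P : Measure Ω) (Z : Ω → ι → 𝕜) : Monotone (concFnE P Z) :=
  fun _ _ hst => iSup_mono fun _ => measure_mono fun _ hω => le_trans hω hst

variable {t₀ M : ℝ}

lemma concFnE_le_of_concFn_le_of_pos (hZ : ∀ j, Measurable fun ω => Z ω j)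
    (hindep : iIndepFun (fun j ω => Z ω j) P) (ht₀ : 0 ≤ t₀) (hM : 0 ≤ M)
    (hconc : ∀ j, ∀ t : ℝ, 0 ≤ t →
      concFn P (fun ω => Z ω j) t ≤ ENNReal.ofReal (M * (t + t₀))) {t : ℝ} (ht : 0 < t) :
    concFnE P Z (t * √(Fintype.card ι)) ≤
      ENNReal.ofReal ((4 * exp 1 * M * (t + t₀)) ^ Fintype.card ι) := by
  refine iSup_le fun u => ?_
  calc P {ω | eNorm (fun i => Z ω i - u i) ≤ t * √(Fintype.card ι)}
      ≤ ENNReal.ofReal (exp 1) ^ Fintype.card ι *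
          ∏ j, ∫⁻ ω, ENNReal.ofReal (exp (-(‖Z ω j - u j‖ ^ 2 / t ^ 2))) ∂P :=
        measure_eNorm_sub_le_prod_lintegral hZ hindep u ht
    _ ≤ ENNReal.ofReal (exp 1) ^ Fintype.card ι *
          ∏ _j : ι, ENNReal.ofReal (4 * (M * (t + t₀))) := by
        gcongr with j
        exact lintegral_exp_neg_norm_sub_sq_div_le (hZ j) (u j) ht₀ hM (hconc j) ht
    _ = ENNReal.ofReal ((4 * exp 1 * M * (t + t₀)) ^ Fintype.card ι) := by
        rw [Finset.prod_const, Finset.card_univ, ← mul_pow, ← ENNReal.ofReal_mul (exp_pos _).le,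
          ← ENNReal.ofReal_pow (by positivity)]
        ring_nf

theorem concFnE_le_of_concFn_le (hZ : ∀ j, Measurable fun ω => Z ω j)
    (hindep : iIndepFun (fun j ω => Z ω j) P) (ht₀ : 0 ≤ t₀) (hM : 0 ≤ M)
    (hconc : ∀ j, ∀ t : ℝ, 0 ≤ t →
      concFn P (fun ω => Z ω j) t ≤ ENNReal.ofReal (M * (t + t₀))) {t : ℝ} (ht : 0 ≤ t) :
    concFnE P Z (t * √(Fintype.card ι)) ≤
      ENNReal.ofReal ((4 * exp 1 * M * (t + t₀)) ^ Fintype.card ι) := by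
  have hbound : Tendsto (fun s => ENNReal.ofReal ((4 * exp 1 * M * (s + t₀)) ^ Fintype.card ι))
      (𝓝[>] t) (𝓝 (ENNReal.ofReal ((4 * exp 1 * M * (t + t₀)) ^ Fintype.card ι))) :=
    ((ENNReal.continuous_ofReal.comp (by fun_prop)).tendsto t).mono_left nhdsWithin_le_nhds
  refine ge_of_tendsto hbound (eventually_nhdsWithin_of_forall fun s (hs : t < s) => ?_)
  exact (concFnE_mono P Z (by gcongr)).trans
    (concFnE_le_of_concFn_le_of_pos hZ hindep ht₀ hM hconc (ht.trans_lt hs))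

end

/-- **Tensorization of small ball probabilities** (Rudelson–Vershynin, Lemma 3.2). -/
theorem tensorization :
    ∃ C : ℝ, 0 < C ∧
      ∀ (n : ℕ) (Ω : Type) (_ : MeasurableSpace Ω) (P : Measure Ω),
        IsProbabilityMeasure P →
        ∀ Z : Ω → Fin n → ℂ,
          (∀ j, Measurable fun ω => Z ω j) →
          iIndepFun (fun j ω => Z ω j) P →
          ∀ t₀ M : ℝ, 0 ≤ t₀ → 0 ≤ M →
            (∀ j, ∀ t : ℝ, 0 ≤ t →
              concFn P (fun ω => Z ω j) t ≤ ENNReal.ofReal (M * (t + t₀))) →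
            ∀ t : ℝ, 0 ≤ t →
              concFnE P Z (t * Real.sqrt n) ≤ ENNReal.ofReal ((C * M * (t + t₀)) ^ n) :=
  ⟨4 * exp 1, by positivity, fun n _ _ _ _ _ hZ hindep _ _ ht₀ hM hconc _ ht => by
    simpa using concFnE_le_of_concFn_le hZ hindep ht₀ hM hconc ht⟩
end
end

section
/- Let Z = X + iY be a random vector in ℂ^N whose imaginary part Y ∈ ℝ^N is fixed (deterministic). Let X₁ and X₂ be independent copies of X and set Ẑ = (X₁, X₂) ∈ ℝ^{2N}. Then for every complex subspace E ⊆ ℂ^N and every r ≥ 0, L(P_E Z, r) ≤ L(P_{real(E)} Ẑ, 2r)^{1/2}, where P_E and P_{real(E)} denote the orthogonal projections onto E and onto real(E) respectively. -/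
open MeasureTheory ProbabilityTheory
open scoped ENNReal

noncomputable section

/-- The real form of a complex vector: `real(x + iy) = (x, y) ∈ ℝ^{2N}`. -/
def realVec {N : ℕ} (z : EuclideanSpace ℂ (Fin N)) : EuclideanSpace ℝ (Fin N ⊕ Fin N) :=
  WithLp.toLp 2 (Sum.elim (fun i => (z i).re) (fun i => (z i).im))

/-!
For a fixed centre `u`, let `S` be the set of `x` with `‖P_E (x + iY) - u‖ ≤ r`. By
independence, `P(X ∈ S)² = P(X₁ ∈ S, X₂ ∈ S)`. Writing `zₖ = Xₖ + iY`, we have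
`X₁ + iX₂ = z₁ + i z₂ - (i - 1) Y`, so on that event `P_E (X₁ + iX₂)` lies within `2r` of
the fixed point `u + iu - P_E ((i - 1) Y)`. Finally `real` is an `ℝ`-linear isometry carrying
`E` onto `real(E)` and preserving real inner products, so it intertwines `P_E` with
`P_{real(E)}`, and `real (X₁ + iX₂) = Ẑ`.
-/

section Symmetrization

variable {Ω α V W : Type*} [MeasurableSpace Ω] [MeasurableSpace α] [SeminormedAddCommGroup V]
  [SeminormedAddGroup W] {P : Measure Ω}

theorem measure_preimage_mul_self_eq_of_indepFun {X X₁ X₂ : Ω → α}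
    (hX : Measurable X) (hX₁ : Measurable X₁) (hX₂ : Measurable X₂) (hindep : IndepFun X₁ X₂ P)
    (hcopy₁ : P.map X₁ = P.map X) (hcopy₂ : P.map X₂ = P.map X)
    {S : Set α} (hS : MeasurableSet S) :
    P (X ⁻¹' S) * P (X ⁻¹' S) = P (X₁ ⁻¹' S ∩ X₂ ⁻¹' S) := by
  rw [hindep.measure_inter_preimage_eq_mul S S hS hS, ← Measure.map_apply hX₁ hS,
    ← Measure.map_apply hX₂ hS, hcopy₁, hcopy₂, Measure.map_apply hX hS]

theorem concFn_le_rpow_half_of_indepFun [TopologicalSpace α] [OpensMeasurableSpace α]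
    {X X₁ X₂ : Ω → α}
    (hX : Measurable X) (hX₁ : Measurable X₁) (hX₂ : Measurable X₂) (hindep : IndepFun X₁ X₂ P)
    (hcopy₁ : P.map X₁ = P.map X) (hcopy₂ : P.map X₂ = P.map X)
    {f : α → V} (hf : Continuous f) (g : α → α → W) (r : ℝ)
    (hg : ∀ u, ∃ w, ∀ a b, ‖g a b - w‖ ≤ ‖f a - u‖ + ‖f b - u‖) :
    concFn P (fun ω => f (X ω)) r ≤ concFn P (fun ω => g (X₁ ω) (X₂ ω)) (2 * r) ^ (1 / 2 : ℝ) := by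
  refine iSup_le fun u => ?_
  rw [one_div, ENNReal.le_rpow_inv_iff two_pos, ENNReal.rpow_two, sq]
  obtain ⟨w, hw⟩ := hg u
  set S := {a | ‖f a - u‖ ≤ r}
  have hS : MeasurableSet S :=
    (isClosed_le (hf.sub continuous_const).norm continuous_const).measurableSet
  calc P (X ⁻¹' S) * P (X ⁻¹' S)
      = P (X₁ ⁻¹' S ∩ X₂ ⁻¹' S) :=
        measure_preimage_mul_self_eq_of_indepFun hX hX₁ hX₂ hindep hcopy₁ hcopy₂ hS
    _ ≤ P {ω | ‖g (X₁ ω) (X₂ ω) - w‖ ≤ 2 * r} :=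
        measure_mono fun ω ⟨h₁, h₂⟩ => (hw _ _).trans (two_mul r ▸ add_le_add h₁ h₂)
    _ ≤ _ := le_iSup (fun w => P {ω | ‖g (X₁ ω) (X₂ ω) - w‖ ≤ 2 * r}) w

end Symmetrization

section RealForm

variable {N : ℕ} {E : Submodule ℂ (EuclideanSpace ℂ (Fin N))}
  {F : Submodule ℝ (EuclideanSpace ℝ (Fin N ⊕ Fin N))}

lemma realVec_sub (a b : EuclideanSpace ℂ (Fin N)) :
    realVec (a - b) = realVec a - realVec b := by
  ext x; cases x <;> simp [realVec]

lemma norm_realVec (a : EuclideanSpace ℂ (Fin N)) : ‖realVec a‖ = ‖a‖ := by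
  rw [EuclideanSpace.norm_eq, EuclideanSpace.norm_eq, Fintype.sum_sum_type,
    ← Finset.sum_add_distrib]
  congr 1
  refine Finset.sum_congr rfl fun i _ => ?_
  simp [realVec, Complex.sq_norm, Complex.normSq_apply]
  ring

lemma inner_realVec (a b : EuclideanSpace ℂ (Fin N)) :
    inner ℝ (realVec a) (realVec b) = (inner ℂ a b).re := by
  simp only [PiLp.inner_apply, RCLike.inner_apply, realVec]
  rw [Complex.re_sum, Fintype.sum_sum_type, ← Finset.sum_add_distrib]
  refine Finset.sum_congr rfl fun i _ => ?_
  simp [Complex.mul_re]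

def ofReIm (x y : Fin N → ℝ) : EuclideanSpace ℂ (Fin N) :=
  WithLp.toLp 2 fun i => (x i : ℂ) + (y i : ℂ) * Complex.I

lemma continuous_ofReIm_left (y : Fin N → ℝ) : Continuous fun x => ofReIm x y := by
  unfold ofReIm; fun_prop

lemma realVec_ofReIm (x y : Fin N → ℝ) :
    realVec (ofReIm x y) = WithLp.toLp 2 (Sum.elim x y) := by
  ext i; cases i <;> simp [realVec, ofReIm]

lemma ofReIm_eq (a b y : Fin N → ℝ) :
    ofReIm a b = ofReIm a y + Complex.I • ofReIm b y - ofReIm (-y) y := by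
  ext i
  simp only [ofReIm, PiLp.add_apply, PiLp.sub_apply, PiLp.smul_apply, smul_eq_mul, Pi.neg_apply,
    Complex.ofReal_neg]
  linear_combination (-(y i : ℂ)) * Complex.I_mul_I

lemma realVec_starProjection
    (hF : (F : Set (EuclideanSpace ℝ (Fin N ⊕ Fin N))) = realVec '' (E : Set _))
    (z : EuclideanSpace ℂ (Fin N)) :
    realVec (E.starProjection z) = F.starProjection (realVec z) := by
  have mem_F : ∀ {e}, e ∈ E → realVec e ∈ F := fun he =>
    (Set.ext_iff.mp hF _).mpr ⟨_, he, rfl⟩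
  refine (F.eq_starProjection_of_mem_of_inner_eq_zero (mem_F (E.starProjection_apply_mem z))
    fun w hw => ?_).symm
  obtain ⟨e, he, rfl⟩ := (Set.ext_iff.mp hF w).mp hw
  rw [← realVec_sub, inner_realVec,
    Submodule.inner_left_of_mem_orthogonal he (E.sub_starProjection_mem_orthogonal z),
    Complex.zero_re]

lemma norm_starProjection_sub_realVec_le
    (hF : (F : Set (EuclideanSpace ℝ (Fin N ⊕ Fin N))) = realVec '' (E : Set _))
    (y : Fin N → ℝ) (u : EuclideanSpace ℂ (Fin N)) (a b : Fin N → ℝ) :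
    ‖F.starProjection (WithLp.toLp 2 (Sum.elim a b)) -
        realVec (u + Complex.I • u - E.starProjection (ofReIm (-y) y))‖ ≤
      ‖E.starProjection (ofReIm a y) - u‖ + ‖E.starProjection (ofReIm b y) - u‖ :=
  calc _ = ‖(E.starProjection (ofReIm a y) - u) +
          Complex.I • (E.starProjection (ofReIm b y) - u)‖ := by
        rw [← realVec_ofReIm, ← realVec_starProjection hF, ← realVec_sub, norm_realVec,
          ofReIm_eq a b y]
        simp only [map_sub, map_add, map_smul, smul_sub]
        congr 1; abel
    _ ≤ _ := by
        simpa [norm_smul] using norm_add_le _ (Complex.I • (E.starProjection (ofReIm b y) - u))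

end RealForm

theorem randomize_all_coordinates_general
    (N : ℕ) (Ω : Type) [MeasurableSpace Ω] (P : Measure Ω)
    (X X₁ X₂ : Ω → Fin N → ℝ) (Y : Fin N → ℝ)
    (hX : Measurable X) (hX₁ : Measurable X₁) (hX₂ : Measurable X₂)
    (hindep : IndepFun X₁ X₂ P)
    (hcopy₁ : P.map X₁ = P.map X) (hcopy₂ : P.map X₂ = P.map X)
    (E : Submodule ℂ (EuclideanSpace ℂ (Fin N)))
    (F : Submodule ℝ (EuclideanSpace ℝ (Fin N ⊕ Fin N)))
    (hF : (F : Set (EuclideanSpace ℝ (Fin N ⊕ Fin N))) = realVec '' (E : Set (EuclideanSpace ℂ (Fin N))))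
    (r : ℝ) :
    concFn P
        (fun ω => (E.orthogonalProjection
          (WithLp.toLp 2 (fun i => (X ω i : ℂ) + (Y i : ℂ) * Complex.I)) : EuclideanSpace ℂ (Fin N))) r ≤
      (concFn P
          (fun ω => (F.orthogonalProjection
            (WithLp.toLp 2 (Sum.elim (X₁ ω) (X₂ ω))) : EuclideanSpace ℝ (Fin N ⊕ Fin N))) (2 * r)) ^
        (1 / 2 : ℝ) := by
  exact concFn_le_rpow_half_of_indepFun hX hX₁ hX₂ hindep hcopy₁ hcopy₂
    (f := fun x => E.starProjection (ofReIm x Y))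
    (E.starProjection.continuous.comp (continuous_ofReIm_left Y))
    (fun a b => F.starProjection (WithLp.toLp 2 (Sum.elim a b))) r
    fun u => ⟨_, norm_starProjection_sub_realVec_le hF Y u⟩

/-- **Randomizing all coordinates** (Rudelson–Vershynin, Lemma 5.6).  If `Z = X + iY` has a
fixed imaginary part `Y`, `X₁, X₂` are independent copies of `X`, and `Ẑ = (X₁, X₂) ∈ ℝ^{2N}`,
then for every complex subspace `E ⊆ ℂ^N` (with real form `F = real(E) ⊆ ℝ^{2N}`) and `r ≥ 0`,
`L(P_E Z, r) ≤ L(P_F Ẑ, 2r)^{1/2}`. -/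
theorem randomize_all_coordinates
    (N : ℕ) (Ω : Type) [MeasurableSpace Ω] (P : Measure Ω) [IsProbabilityMeasure P]
    (X X₁ X₂ : Ω → Fin N → ℝ) (Y : Fin N → ℝ)
    (hX : Measurable X) (hX₁ : Measurable X₁) (hX₂ : Measurable X₂)
    (hindep : IndepFun X₁ X₂ P)
    (hcopy₁ : P.map X₁ = P.map X) (hcopy₂ : P.map X₂ = P.map X)
    (E : Submodule ℂ (EuclideanSpace ℂ (Fin N)))
    (F : Submodule ℝ (EuclideanSpace ℝ (Fin N ⊕ Fin N)))
    (hF : (F : Set (EuclideanSpace ℝ (Fin N ⊕ Fin N))) = realVec '' (E : Set (EuclideanSpace ℂ (Fin N))))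
    (r : ℝ) (hr : 0 ≤ r) :
    concFn P
        (fun ω => (E.orthogonalProjection
          (WithLp.toLp 2 (fun i => (X ω i : ℂ) + (Y i : ℂ) * Complex.I)) : EuclideanSpace ℂ (Fin N))) r ≤
      (concFn P
          (fun ω => (F.orthogonalProjection
            (WithLp.toLp 2 (Sum.elim (X₁ ω) (X₂ ω))) : EuclideanSpace ℝ (Fin N ⊕ Fin N))) (2 * r)) ^
        (1 / 2 : ℝ) :=
  randomize_all_coordinates_general N Ω P X X₁ X₂ Y hX hX₁ hX₂ hindep hcopy₁ hcopy₂ E F hF r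
end
end

section
/- Let A be an m×n complex matrix decomposed into two stacked blocks, A = [B; G], where B is m₁×n, G is m₂×n and m = m₁ + m₂. Consider an orthogonal decomposition ℂ^n = E⁻ ⊕ E⁺ where E⁻ and E⁺ are spanned by two disjoint sets of right singular vectors of B (equivalently, they are invariant subspaces of B*B). Set s_A = inf{‖Ax‖₂ : ‖x‖₂ = 1}, s_B = inf{‖Bx‖₂ : x ∈ E⁺, ‖x‖₂ = 1}, and s_G = inf{‖Gx‖₂ : x ∈ E⁻, ‖x‖₂ = 1}. Then s_B · s_G ≤ 4 ‖A‖ · s_A, where ‖A‖ is the operator norm of A. -/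
open Matrix
open scoped ComplexConjugate

noncomputable section

/-!
Split a unit vector as `x = u + v` with `u ∈ E⁻` and `v ∈ E⁺`. Since `E⁻` is invariant under
`B*B`, the vectors `Bu` and `Bv` are orthogonal, so `s_B ‖v‖ ≤ ‖Bv‖ ≤ ‖Bx‖ ≤ ‖Ax‖`; and
`s_G ‖u‖ ≤ ‖Gu‖ ≤ ‖Gx‖ + ‖Gv‖ ≤ ‖Ax‖ + ‖A‖ ‖v‖`. Multiplying these by `s_G` and `s_B`, adding, and
using `‖u‖ + ‖v‖ ≥ 1` and `s_B, s_G ≤ ‖A‖` gives `s_B s_G ≤ 3 ‖A‖ ‖Ax‖` for every unit `x`.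
-/

open scoped InnerProductSpace Matrix.Norms.L2Operator

section InfNormOn

variable {𝕜 E F : Type*} [RCLike 𝕜] [NormedAddCommGroup E] [NormedSpace 𝕜 E]
  [NormedAddCommGroup F] [NormedSpace 𝕜 F] (f : E →ₗ[𝕜] F) (K : Submodule 𝕜 E)

/-- This is `0` when `K` contains no unit vector, since `sInf ∅ = 0`. -/
def infNormOn : ℝ :=
  sInf {r | ∃ x ∈ K, ‖x‖ = 1 ∧ r = ‖f x‖}

theorem infNormOn_nonneg : 0 ≤ infNormOn f K :=
  Real.sInf_nonneg (by rintro _ ⟨x, -, -, rfl⟩; exact norm_nonneg _)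

variable {f K}

theorem infNormOn_le {x : E} (hx : x ∈ K) (hx1 : ‖x‖ = 1) : infNormOn f K ≤ ‖f x‖ :=
  csInf_le ⟨0, by rintro _ ⟨y, -, -, rfl⟩; exact norm_nonneg _⟩ ⟨x, hx, hx1, rfl⟩

theorem infNormOn_mul_norm_le {x : E} (hx : x ∈ K) : infNormOn f K * ‖x‖ ≤ ‖f x‖ := by
  rcases eq_or_ne x 0 with rfl | hx0
  · simp
  have hpos : 0 < ‖x‖ := norm_pos_iff.mpr hx0
  have h := infNormOn_le (f := f) (K.smul_mem (‖x‖⁻¹ : 𝕜) hx) (norm_smul_inv_norm hx0)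
  rw [map_smul, norm_smul, norm_inv, RCLike.norm_ofReal, abs_norm] at h
  calc infNormOn f K * ‖x‖ ≤ ‖x‖⁻¹ * ‖f x‖ * ‖x‖ := by gcongr
    _ = ‖f x‖ := by field_simp

theorem infNormOn_eq_zero (hK : ∀ x ∈ K, ‖x‖ ≠ 1) : infNormOn f K = 0 := by
  rw [infNormOn, ← Real.sInf_empty]
  congr 1
  refine Set.eq_empty_iff_forall_notMem.mpr ?_
  rintro _ ⟨x, hx, hx1, -⟩
  exact hK x hx hx1

theorem infNormOn_le_of_forall_norm_le {M : ℝ} (hM : 0 ≤ M) (hf : ∀ x ∈ K, ‖f x‖ ≤ M * ‖x‖) :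
    infNormOn f K ≤ M := by
  by_cases hK : ∃ x ∈ K, ‖x‖ = 1
  · obtain ⟨x, hx, hx1⟩ := hK
    simpa [hx1] using (infNormOn_le hx hx1).trans (hf x hx)
  · push Not at hK
    rw [infNormOn_eq_zero hK]
    exact hM

theorem le_mul_infNormOn {c k : ℝ} (hK : ∃ x ∈ K, ‖x‖ = 1) (hk : 0 ≤ k)
    (h : ∀ x ∈ K, ‖x‖ = 1 → c ≤ k * ‖f x‖) : c ≤ k * infNormOn f K := by
  obtain ⟨x, hx, hx1⟩ := hK
  rw [infNormOn, ← smul_eq_mul, ← Real.sInf_smul_of_nonneg hk]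
  refine le_csInf (Set.Nonempty.smul_set ⟨‖f x‖, x, hx, hx1, rfl⟩) ?_
  rintro _ ⟨_, ⟨y, hy, hy1, rfl⟩, rfl⟩
  exact h y hy hy1

end InfNormOn

section Orthogonal

variable {𝕜 E F₁ F₂ : Type*} [RCLike 𝕜] [NormedAddCommGroup E] [InnerProductSpace 𝕜 E]
  [NormedAddCommGroup F₁] [InnerProductSpace 𝕜 F₁] [NormedAddCommGroup F₂] [NormedSpace 𝕜 F₂]
  {K : Submodule 𝕜 E} {b : E →ₗ[𝕜] F₁}

theorem norm_apply_le_norm_apply_add (horth : ∀ u ∈ K, ∀ v ∈ Kᗮ, ⟪b u, b v⟫_𝕜 = 0)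
    {u v : E} (hu : u ∈ K) (hv : v ∈ Kᗮ) : ‖b v‖ ≤ ‖b (u + v)‖ := by
  have h := norm_add_sq_eq_norm_sq_add_norm_sq_of_inner_eq_zero _ _ (horth u hu v hv)
  rw [← map_add] at h
  nlinarith [norm_nonneg (b v), norm_nonneg (b (u + v)), sq_nonneg ‖b u‖]

theorem infNormOn_mul_infNormOn_mul_norm_le [K.HasOrthogonalProjection] (g : E →ₗ[𝕜] F₂)
    (horth : ∀ u ∈ K, ∀ v ∈ Kᗮ, ⟪b u, b v⟫_𝕜 = 0) {M r : ℝ} (hM : 0 ≤ M)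
    (hg : ∀ y, ‖g y‖ ≤ M * ‖y‖) {x : E} (hbx : ‖b x‖ ≤ r) (hgx : ‖g x‖ ≤ r) :
    infNormOn b Kᗮ * infNormOn g K * ‖x‖ ≤ (infNormOn b Kᗮ + infNormOn g K + M) * r := by
  obtain ⟨u, hu, v, hv, rfl⟩ := K.exists_add_mem_mem_orthogonal x
  set sB := infNormOn b Kᗮ
  set sG := infNormOn g K
  have hsB : 0 ≤ sB := infNormOn_nonneg _ _
  have hsG : 0 ≤ sG := infNormOn_nonneg _ _
  have hv_le : sB * ‖v‖ ≤ r :=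
    (infNormOn_mul_norm_le hv).trans ((norm_apply_le_norm_apply_add horth hu hv).trans hbx)
  have hu_le : sG * ‖u‖ ≤ r + M * ‖v‖ :=
    calc sG * ‖u‖ ≤ ‖g u‖ := infNormOn_mul_norm_le hu
      _ = ‖g (u + v) - g v‖ := by rw [map_add, add_sub_cancel_right]
      _ ≤ ‖g (u + v)‖ + ‖g v‖ := norm_sub_le _ _
      _ ≤ r + M * ‖v‖ := add_le_add hgx (hg v)
  calc sB * sG * ‖u + v‖ ≤ sB * (sG * ‖u‖) + sG * (sB * ‖v‖) := by
        nlinarith [norm_add_le u v, mul_nonneg hsB hsG]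
    _ ≤ sB * (r + M * ‖v‖) + sG * r := by gcongr
    _ = sB * r + M * (sB * ‖v‖) + sG * r := by ring
    _ ≤ sB * r + M * r + sG * r := by gcongr
    _ = (sB + sG + M) * r := by ring

end Orthogonal

section Matrix

variable {𝕜 : Type*} [RCLike 𝕜] {m m₁ m₂ n : Type*} [Fintype m] [Fintype m₁] [Fintype m₂]
  [Fintype n] [DecidableEq n]

omit [DecidableEq n] in
theorem eNorm_ofLp (x : EuclideanSpace 𝕜 n) : eNorm x.ofLp = ‖x‖ :=
  (EuclideanSpace.norm_eq x).symm

theorem eNorm_mulVec (A : Matrix m n 𝕜) (x : EuclideanSpace 𝕜 n) :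
    eNorm (A *ᵥ x.ofLp) = ‖toEuclideanLin A x‖ :=
  eNorm_ofLp (toEuclideanLin A x)

theorem sInf_eNorm_mulVec_eq_infNormOn (A : Matrix m n 𝕜)
    (K : Submodule 𝕜 (EuclideanSpace 𝕜 n)) :
    sInf {r : ℝ | ∃ x : EuclideanSpace 𝕜 n, x ∈ K ∧ eNorm x.ofLp = 1 ∧ r = eNorm (A *ᵥ x.ofLp)} =
      infNormOn (toEuclideanLin A) K := by
  simp only [eNorm_ofLp, eNorm_mulVec]
  rfl

theorem sMin_eq_infNormOn (A : Matrix m n 𝕜) : sMin A = infNormOn (toEuclideanLin A) ⊤ := by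
  rw [← sInf_eNorm_mulVec_eq_infNormOn, sMin]
  congr 1
  ext r
  constructor
  · rintro ⟨x, hx1, rfl⟩
    exact ⟨WithLp.toLp 2 x, Submodule.mem_top, hx1, rfl⟩
  · rintro ⟨x, -, hx1, rfl⟩
    exact ⟨x.ofLp, hx1, rfl⟩

theorem opNorm_eq_l2_opNorm (A : Matrix m n 𝕜) : opNorm A = ‖A‖ := by
  rw [l2_opNorm_def, ← ContinuousLinearMap.sSup_unitClosedBall_eq_norm, opNorm]
  congr 1
  ext r
  simp only [Metric.mem_closedBall, dist_zero_right, Set.mem_image, Set.mem_ofPred_eq]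
  constructor
  · rintro ⟨x, hx1, rfl⟩
    exact ⟨WithLp.toLp 2 x, by rwa [← eNorm_ofLp], (eNorm_mulVec A _).symm⟩
  · rintro ⟨x, hx1, rfl⟩
    exact ⟨x.ofLp, by rwa [eNorm_ofLp], (eNorm_mulVec A x).symm⟩

theorem norm_toEuclideanLin_fromRows_sq (B : Matrix m₁ n 𝕜) (G : Matrix m₂ n 𝕜)
    (x : EuclideanSpace 𝕜 n) :
    ‖toEuclideanLin (fromRows B G) x‖ ^ 2 =
      ‖toEuclideanLin B x‖ ^ 2 + ‖toEuclideanLin G x‖ ^ 2 := by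
  simp only [EuclideanSpace.norm_sq_eq, toLpLin_apply, fromRows_mulVec, Fintype.sum_sum_type,
    Sum.elim_inl, Sum.elim_inr]

theorem norm_toEuclideanLin_le_fromRows_left (B : Matrix m₁ n 𝕜) (G : Matrix m₂ n 𝕜)
    (x : EuclideanSpace 𝕜 n) : ‖toEuclideanLin B x‖ ≤ ‖toEuclideanLin (fromRows B G) x‖ := by
  refine le_of_sq_le_sq ?_ (norm_nonneg _)
  rw [norm_toEuclideanLin_fromRows_sq]
  nlinarith [sq_nonneg ‖toEuclideanLin G x‖]

theorem norm_toEuclideanLin_le_fromRows_right (B : Matrix m₁ n 𝕜) (G : Matrix m₂ n 𝕜)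
    (x : EuclideanSpace 𝕜 n) : ‖toEuclideanLin G x‖ ≤ ‖toEuclideanLin (fromRows B G) x‖ := by
  refine le_of_sq_le_sq ?_ (norm_nonneg _)
  rw [norm_toEuclideanLin_fromRows_sq]
  nlinarith [sq_nonneg ‖toEuclideanLin B x‖]

theorem inner_toEuclideanLin_eq_zero_of_conjTranspose_mul_self_mem [DecidableEq m]
    (A : Matrix m n 𝕜) {K : Submodule 𝕜 (EuclideanSpace 𝕜 n)}
    (hK : ∀ x ∈ K, toEuclideanLin (Aᴴ * A) x ∈ K) :
    ∀ u ∈ K, ∀ v ∈ Kᗮ, ⟪toEuclideanLin A u, toEuclideanLin A v⟫_𝕜 = 0 := by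
  intro u hu v hv
  rw [← LinearMap.adjoint_inner_left, ← toEuclideanLin_conjTranspose_eq_adjoint,
    ← LinearMap.comp_apply, ← toLpLin_mul]
  exact Submodule.inner_right_of_mem_orthogonal (hK u hu) hv

end Matrix

/-- **Decomposition lemma** (Rudelson–Vershynin, Lemma 5.12).  If `A = [B; G]` is a block
matrix, and `ℂ^n = E⁻ ⊕ E⁺` is an orthogonal decomposition into invariant subspaces of `B*B`
(spans of disjoint sets of right singular vectors of `B`), then `s_B · s_G ≤ 4 ‖A‖ s_A`. -/
theorem decomposition_lemma
    (m₁ m₂ n : ℕ)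
    (B : Matrix (Fin m₁) (Fin n) ℂ) (G : Matrix (Fin m₂) (Fin n) ℂ)
    (Eminus Eplus : Submodule ℂ (EuclideanSpace ℂ (Fin n)))
    (hperp : Eplus = Eminusᗮ)
    (hinv : ∀ x : EuclideanSpace ℂ (Fin n), x ∈ Eminus →
      (show EuclideanSpace ℂ (Fin n) from WithLp.toLp 2 ((Bᴴ * B).mulVec x)) ∈ Eminus) :
    (sInf {r : ℝ | ∃ x : EuclideanSpace ℂ (Fin n),
            x ∈ Eplus ∧ eNorm x = 1 ∧ r = eNorm (B.mulVec x)}) *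
      (sInf {r : ℝ | ∃ x : EuclideanSpace ℂ (Fin n),
            x ∈ Eminus ∧ eNorm x = 1 ∧ r = eNorm (G.mulVec x)}) ≤
    4 * opNorm (Matrix.fromRows B G) * sMin (Matrix.fromRows B G) := by
  subst hperp
  rw [sInf_eNorm_mulVec_eq_infNormOn, sInf_eNorm_mulVec_eq_infNormOn, opNorm_eq_l2_opNorm,
    sMin_eq_infNormOn]
  set A := fromRows B G
  set sB := infNormOn (toEuclideanLin B) Eminusᗮ
  set sG := infNormOn (toEuclideanLin G) Eminus
  have hB (y) : ‖toEuclideanLin B y‖ ≤ ‖A‖ * ‖y‖ :=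
    (norm_toEuclideanLin_le_fromRows_left B G y).trans (l2_opNorm_mulVec A y)
  have hG (y) : ‖toEuclideanLin G y‖ ≤ ‖A‖ * ‖y‖ :=
    (norm_toEuclideanLin_le_fromRows_right B G y).trans (l2_opNorm_mulVec A y)
  have hsB : sB ≤ ‖A‖ := infNormOn_le_of_forall_norm_le (norm_nonneg _) fun y _ ↦ hB y
  have hsG : sG ≤ ‖A‖ := infNormOn_le_of_forall_norm_le (norm_nonneg _) fun y _ ↦ hG y
  by_cases hEplus : ∀ x ∈ Eminusᗮ, ‖x‖ ≠ 1
  · rw [show sB = 0 from infNormOn_eq_zero hEplus, zero_mul]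
    have := infNormOn_nonneg (toEuclideanLin A) ⊤
    positivity
  push Not at hEplus
  obtain ⟨p, -, hp⟩ := hEplus
  calc sB * sG ≤ 3 * ‖A‖ * infNormOn (toEuclideanLin A) ⊤ := by
        refine le_mul_infNormOn ⟨p, Submodule.mem_top, hp⟩ (by positivity) fun x _ hx ↦ ?_
        have key := infNormOn_mul_infNormOn_mul_norm_le (toEuclideanLin G)
          (inner_toEuclideanLin_eq_zero_of_conjTranspose_mul_self_mem B hinv) (norm_nonneg A)
          hG (norm_toEuclideanLin_le_fromRows_left B G x)
          (norm_toEuclideanLin_le_fromRows_right B G x)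
        rw [hx, mul_one] at key
        exact key.trans (by gcongr; linarith)
    _ ≤ 4 * ‖A‖ * infNormOn (toEuclideanLin A) ⊤ := by
        have := infNormOn_nonneg (toEuclideanLin A) ⊤
        gcongr
        norm_num
end
end

section
/- There exist constants c, c' > 0 depending only on p and K such that the following holds. Let ξ₁,…,ξ_N be independent real random variables, each satisfying sup_{u∈ℝ} P(|ξ_k − u| ≤ 1) ≤ 1−p and P(|ξ_k| > K) ≤ p/2, and let a₁,…,a_N be real numbers with Σ_{k=1}^N a_k² = 1. Then L( Σ_{k=1}^N a_k ξ_k, c ) ≤ 1 − c'. -/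
/-!
Let `ξ'` be an independent copy of `ξ` and `η = ξ - ξ'`. The square of the concentration function
of `S = ∑ aₖ ξₖ` at scale `c` is at most `P(|∑ aₖ ηₖ| ≤ 2c)`, and the symmetric vector `η` has the
same law as `(εₖ ηₖ)` for every sign pattern `ε`; so it suffices to bound, for fixed `η`, the
proportion of sign patterns with `|∑ εₖ aₖ ηₖ| ≤ 2c`. The small-ball hypothesis gives
`P(|ηₖ| > 1) ≥ p`, hence with probability at least `p/2` the variance `∑ aₖ² ηₖ²` of the Rademacher
sum is at least `p/2`. For such `η`, the Paley–Zygmund inequality together with Khintchine's bound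
`E X⁴ ≤ 3 (E X²)²` shows that at least `3/16` of the sign patterns give `|∑ εₖ aₖ ηₖ| > 2c` once
`(2c)² < p/8`. Hence `L(S, c)² ≤ 1 - 3p/32` (for `p ≤ 1`; otherwise use `min p 1`).
-/

open MeasureTheory ProbabilityTheory
open scoped ENNReal

noncomputable section

open Finset

/-- The Paley–Zygmund inequality for the uniform measure on `S`. -/
lemma sq_one_sub_mul_sum_le_card_filter_mul_sum_sq {α : Type*} (S : Finset α) {Y : α → ℝ}
    (hY : ∀ s ∈ S, 0 ≤ Y s) {θ : ℝ} (hθ0 : 0 ≤ θ) (hθ1 : θ ≤ 1) :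
    ((1 - θ) * ∑ s ∈ S, Y s) ^ 2
      ≤ #{s ∈ S | θ * ∑ s ∈ S, Y s ≤ #S * Y s} * ∑ s ∈ S, Y s ^ 2 := by
  classical
  set A := ∑ s ∈ S, Y s
  set big := {s ∈ S | θ * A ≤ #S * Y s}
  have hA : 0 ≤ A := sum_nonneg hY
  have hsmall : #S * ∑ s ∈ S with ¬ θ * A ≤ #S * Y s, Y s ≤ #S * (θ * A) :=
    calc #S * ∑ s ∈ S with ¬ θ * A ≤ #S * Y s, Y s
        ≤ ∑ s ∈ S with ¬ θ * A ≤ #S * Y s, θ * A := by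
          rw [mul_sum]
          exact sum_le_sum fun s hs => (not_le.mp (mem_filter.mp hs).2).le
      _ ≤ #S * (θ * A) := by
          rw [sum_const, nsmul_eq_mul]
          gcongr
          exact filter_subset _ S
  have hbig : (1 - θ) * A ≤ ∑ s ∈ big, Y s := by
    rcases (#S).eq_zero_or_pos with hS | hS
    · rw [show A = 0 by simp [A, card_eq_zero.mp hS], mul_zero]
      exact sum_nonneg fun s hs => hY s (mem_filter.mp hs).1
    have hsplit := sum_filter_add_sum_filter_not S (fun s => θ * A ≤ #S * Y s) Y
    have : (#S : ℝ) * ((1 - θ) * A) ≤ #S * ∑ s ∈ big, Y s := by nlinarith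
    exact le_of_mul_le_mul_left this (by exact_mod_cast hS)
  calc ((1 - θ) * A) ^ 2 ≤ (∑ s ∈ big, Y s) ^ 2 :=
        pow_le_pow_left₀ (mul_nonneg (by linarith) hA) hbig 2
    _ ≤ #big * ∑ s ∈ big, Y s ^ 2 := sq_sum_le_card_mul_sum_sq
    _ ≤ #big * ∑ s ∈ S, Y s ^ 2 := by
        gcongr
        exact filter_subset _ S

section SignPatterns

variable {ι : Type*}

def boolSign (b : Bool) : ℝ := if b then 1 else -1

lemma boolSign_sq (b : Bool) : boolSign b ^ 2 = 1 := by cases b <;> norm_num [boolSign]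

lemma boolSign_not (b : Bool) : boolSign (!b) = -boolSign b := by cases b <;> simp [boolSign]

def signedSum (A : Finset ι) (b : ι → ℝ) (s : ι → Bool) : ℝ := ∑ k ∈ A, boolSign (s k) * b k

lemma signedSum_insert [DecidableEq ι] {A : Finset ι} {k : ι} (hk : k ∉ A) (b : ι → ℝ)
    (s : ι → Bool) : signedSum (insert k A) b s = boolSign (s k) * b k + signedSum A b s :=
  sum_insert hk

lemma signedSum_update [DecidableEq ι] {A : Finset ι} {k : ι} (hk : k ∉ A) (b : ι → ℝ)
    (s : ι → Bool) (v : Bool) : signedSum A b (Function.update s k v) = signedSum A b s :=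
  sum_congr rfl fun j hj => by rw [Function.update_of_ne (ne_of_mem_of_not_mem hj hk)]

variable [Fintype ι] [DecidableEq ι]

/-- Flipping the `k`-th sign is an involution of the sign patterns that reverses `boolSign (s k)`
and leaves `g` unchanged. -/
lemma sum_boolSign_mul_eq_zero (k : ι) {g : (ι → Bool) → ℝ}
    (hg : ∀ s v, g (Function.update s k v) = g s) :
    ∑ s : ι → Bool, boolSign (s k) * g s = 0 := by
  refine sum_ninvolution (fun s => Function.update s k (!s k)) (fun s => ?_) (fun s _ h => ?_)
    (fun s => mem_univ _) (fun s => ?_)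
  · rw [Function.update_self, hg, boolSign_not]
    ring
  · simpa using congrFun h k
  · simp

lemma sum_signedSum_sq (A : Finset ι) (b : ι → ℝ) :
    ∑ s, signedSum A b s ^ 2 = Fintype.card (ι → Bool) * ∑ k ∈ A, b k ^ 2 := by
  induction A using Finset.induction_on with
  | empty => simp [signedSum]
  | @insert k A hk ih =>
    have hcross : ∑ s : ι → Bool, boolSign (s k) * (2 * b k * signedSum A b s) = 0 :=
      sum_boolSign_mul_eq_zero k fun s v => by rw [signedSum_update hk]
    calc ∑ s, signedSum (insert k A) b s ^ 2
        = ∑ s : ι → Bool, (b k ^ 2 + boolSign (s k) * (2 * b k * signedSum A b s)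
            + signedSum A b s ^ 2) := by
          refine sum_congr rfl fun s _ => ?_
          rw [signedSum_insert hk]
          linear_combination b k ^ 2 * boolSign_sq (s k)
      _ = Fintype.card (ι → Bool) * ∑ j ∈ insert k A, b j ^ 2 := by
          rw [sum_add_distrib, sum_add_distrib, hcross, ih, sum_const, nsmul_eq_mul, card_univ,
            sum_insert hk]
          ring

lemma sum_signedSum_pow_four_le (A : Finset ι) (b : ι → ℝ) :
    ∑ s, signedSum A b s ^ 4 ≤ 3 * Fintype.card (ι → Bool) * (∑ k ∈ A, b k ^ 2) ^ 2 := by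
  induction A using Finset.induction_on with
  | empty => simp [signedSum]
  | @insert k A hk ih =>
    set M : ℝ := (Fintype.card (ι → Bool) : ℝ)
    have hcross : ∑ s : ι → Bool, boolSign (s k) *
        (4 * b k ^ 3 * signedSum A b s + 4 * b k * signedSum A b s ^ 3) = 0 :=
      sum_boolSign_mul_eq_zero k fun s v => by rw [signedSum_update hk]
    have hexpand : ∑ s, signedSum (insert k A) b s ^ 4
        = M * b k ^ 4 + 6 * b k ^ 2 * (M * ∑ j ∈ A, b j ^ 2) + ∑ s, signedSum A b s ^ 4 :=
      calc ∑ s, signedSum (insert k A) b s ^ 4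
          = ∑ s : ι → Bool, (b k ^ 4 + 6 * b k ^ 2 * signedSum A b s ^ 2
              + boolSign (s k) * (4 * b k ^ 3 * signedSum A b s
                + 4 * b k * signedSum A b s ^ 3) + signedSum A b s ^ 4) := by
            refine sum_congr rfl fun s _ => ?_
            rw [signedSum_insert hk]
            linear_combination (b k ^ 4 * (boolSign (s k) ^ 2 + 1)
              + 4 * b k ^ 3 * signedSum A b s * boolSign (s k)
              + 6 * b k ^ 2 * signedSum A b s ^ 2) * boolSign_sq (s k)
        _ = _ := by
            rw [sum_add_distrib, sum_add_distrib, sum_add_distrib, hcross, sum_const,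
              nsmul_eq_mul, card_univ, ← mul_sum, sum_signedSum_sq]
            ring
    have hM : 0 ≤ M := Nat.cast_nonneg _
    have hA : 0 ≤ ∑ j ∈ A, b j ^ 2 := sum_nonneg fun j _ => sq_nonneg _
    rw [hexpand, sum_insert hk]
    nlinarith [mul_nonneg hM (sq_nonneg (b k ^ 2)), mul_nonneg (mul_nonneg hM hA) (sq_nonneg (b k))]

/-- Paley–Zygmund with `θ = 1/4`, fed with the second and fourth moments above, shows that at
least `3/16` of the sign patterns satisfy `signedSum² ≥ (∑ b²)/4`. -/
lemma card_abs_signedSum_le_le (b : ι → ℝ) {t : ℝ} (ht : t ^ 2 < (∑ k, b k ^ 2) / 4) :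
    16 * #{s | |signedSum univ b s| ≤ t} ≤ 13 * Fintype.card (ι → Bool) := by
  have hPZ := sq_one_sub_mul_sum_le_card_filter_mul_sum_sq univ
    (Y := fun s => signedSum univ b s ^ 2) (fun s _ => sq_nonneg _) (θ := 1 / 4) (by norm_num)
    (by norm_num)
  simp only [sum_signedSum_sq, card_univ, fun x : ℝ => show (x ^ 2) ^ 2 = x ^ 4 by ring] at hPZ
  have h4 := sum_signedSum_pow_four_le univ b
  set σ2 := ∑ k, b k ^ 2
  set M := Fintype.card (ι → Bool)
  set big : Finset (ι → Bool) := {s | 1 / 4 * (M * σ2) ≤ M * signedSum univ b s ^ 2}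
  have hM : (0 : ℝ) < M := by positivity
  have hσ2 : 0 < σ2 := by nlinarith [sq_nonneg t]
  have hbig : 3 / 16 * M ≤ (#big : ℝ) := by
    refine le_of_mul_le_mul_right (a := 3 * M * σ2 ^ 2) ?_ (by positivity)
    calc 3 / 16 * M * (3 * M * σ2 ^ 2) = ((1 - 1 / 4) * (M * σ2)) ^ 2 := by ring
      _ ≤ _ := hPZ
      _ ≤ #big * (3 * M * σ2 ^ 2) := by gcongr
  have hsmall : #{s | |signedSum univ b s| ≤ t}
      ≤ #{s | ¬ 1 / 4 * (M * σ2) ≤ M * signedSum univ b s ^ 2} := by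
    refine card_le_card (monotone_filter_right _ fun s _ hs => ?_)
    have : signedSum univ b s ^ 2 ≤ t ^ 2 := sq_le_sq' (abs_le.mp hs).1 (abs_le.mp hs).2
    nlinarith
  have hcount : #{s | |signedSum univ b s| ≤ t} + #big ≤ M := by
    have := card_filter_add_card_filter_not (s := (univ : Finset (ι → Bool)))
      fun s => 1 / 4 * (M * σ2) ≤ M * signedSum univ b s ^ 2
    rw [card_univ] at this
    simp only [big]
    omega
  have hcount' := (Nat.cast_le (α := ℝ)).mpr hcount
  push_cast at hcount'
  exact_mod_cast (by linarith : (16 * #{s | |signedSum univ b s| ≤ t} : ℝ) ≤ 13 * M)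

end SignPatterns

lemma ofReal_half_le_measure_half_le {X : Type*} [MeasurableSpace X] (ρ : Measure X)
    [IsProbabilityMeasure ρ] {Z : X → ℝ} (hZ : Measurable Z) (hZ1 : ∀ y, Z y ≤ 1) {p : ℝ}
    (hp : 0 ≤ p) (hpZ : ENNReal.ofReal p ≤ ∫⁻ y, ENNReal.ofReal (Z y) ∂ρ) :
    ENNReal.ofReal (p / 2) ≤ ρ {y | p / 2 ≤ Z y} := by
  set G := {y | p / 2 ≤ Z y}
  have hG : MeasurableSet G := measurableSet_le measurable_const hZ
  have hupper : ∫⁻ y, ENNReal.ofReal (Z y) ∂ρ ≤ ρ G + ENNReal.ofReal (p / 2) :=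
    calc ∫⁻ y, ENNReal.ofReal (Z y) ∂ρ
        ≤ ∫⁻ y, (G.indicator 1 y + ENNReal.ofReal (p / 2)) ∂ρ := by
          refine lintegral_mono fun y => ?_
          by_cases hy : y ∈ G
          · rw [Set.indicator_of_mem hy]
            exact (ENNReal.ofReal_le_one.mpr (hZ1 y)).trans le_self_add
          · rw [Set.indicator_of_notMem hy, zero_add]
            exact ENNReal.ofReal_le_ofReal (not_le.mp hy).le
      _ = ρ G + ENNReal.ofReal (p / 2) := by
          rw [lintegral_add_left (measurable_one.indicator hG), lintegral_indicator_one hG,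
            lintegral_const, measure_univ, mul_one]
  refine ENNReal.le_of_add_le_add_right (a := ENNReal.ofReal (p / 2)) ENNReal.ofReal_ne_top ?_
  rw [← ENNReal.ofReal_add (by positivity) (by positivity), add_halves]
  exact hpZ.trans hupper

/-- `ρ B` is the average over `s` of `ρ (A s)`, i.e. the integral of the fraction of the events
`A s` that occur. -/
lemma measure_add_mul_measure_le_one {X S : Type*} [MeasurableSpace X] [Fintype S] [Nonempty S]
    (ρ : Measure X) [IsProbabilityMeasure ρ] {A : S → Set X} {B G : Set X}
    (hA : ∀ s, MeasurableSet (A s)) (hG : MeasurableSet G) (hAB : ∀ s, ρ (A s) = ρ B)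
    {δ : ℝ≥0∞}
    (hcount : ∀ y ∈ G, ∑ s, (A s).indicator 1 y + δ * Fintype.card S ≤ Fintype.card S) :
    ρ B + δ * ρ G ≤ 1 := by
  have hpt : ∀ y, ∑ s, (A s).indicator 1 y + δ * Fintype.card S * G.indicator 1 y
      ≤ (Fintype.card S : ℝ≥0∞) := by
    intro y
    by_cases hy : y ∈ G
    · simpa [Set.indicator_of_mem hy] using hcount y hy
    · rw [Set.indicator_of_notMem hy, mul_zero, add_zero]
      calc ∑ s, (A s).indicator 1 y ≤ ∑ _s : S, (1 : ℝ≥0∞) :=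
            sum_le_sum fun s _ => Set.indicator_le_self' (fun _ _ => zero_le_one) y
        _ = Fintype.card S := by simp
  have hint := lintegral_mono hpt (μ := ρ)
  rw [lintegral_add_left (Finset.measurable_sum _ fun s _ => measurable_one.indicator (hA s)),
    lintegral_finsetSum _ fun s _ => measurable_one.indicator (hA s),
    lintegral_const_mul _ (measurable_one.indicator hG), lintegral_indicator_one hG,
    lintegral_const, measure_univ, mul_one] at hint
  simp only [lintegral_indicator_one (hA _), hAB, sum_const, card_univ, nsmul_eq_mul] at hint
  have hS : (Fintype.card S : ℝ≥0∞) ≠ 0 := by simp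
  rw [← ENNReal.mul_le_mul_iff_right hS (ENNReal.natCast_ne_top _), mul_one]
  calc (Fintype.card S : ℝ≥0∞) * (ρ B + δ * ρ G)
      = Fintype.card S * ρ B + δ * Fintype.card S * ρ G := by ring
    _ ≤ Fintype.card S := hint

lemma prod_abs_sub_le_le {ν μ₀ : Measure ℝ} [IsProbabilityMeasure ν] [SFinite μ₀] {t : ℝ}
    {q : ℝ≥0∞} (h : ∀ u, μ₀ {x | |x - u| ≤ t} ≤ q) : (ν.prod μ₀) {z | |z.1 - z.2| ≤ t} ≤ q := by
  rw [Measure.prod_apply (measurableSet_le (by fun_prop) measurable_const)]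
  calc ∫⁻ x, μ₀ (Prod.mk x ⁻¹' {z | |z.1 - z.2| ≤ t}) ∂ν
      = ∫⁻ x, μ₀ {w | |w - x| ≤ t} ∂ν := by simp only [Set.preimage_ofPred_eq, abs_sub_comm]
    _ ≤ ∫⁻ _, q ∂ν := lintegral_mono fun x => h x
    _ = q := by simp

section Symmetrization

variable {ι : Type*}

def pairDiff (y : ι → ℝ × ℝ) : ι → ℝ := fun k => (y k).1 - (y k).2

@[fun_prop]
lemma measurable_pairDiff : Measurable (pairDiff : (ι → ℝ × ℝ) → ι → ℝ) := by
  unfold pairDiff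
  fun_prop

variable [Fintype ι]

/-- The law of `(ξ, ξ')`, for `ξ'` an independent copy of `ξ ∼ Measure.pi μ`, arranged
coordinatewise. -/
abbrev pairPi (μ : ι → Measure ℝ) : Measure (ι → ℝ × ℝ) := Measure.pi fun k => (μ k).prod (μ k)

variable (μ : ι → Measure ℝ) [∀ k, IsProbabilityMeasure (μ k)]

lemma pi_measure_abs_sum_sub_le_sq_le (a : ι → ℝ) (u t : ℝ) :
    Measure.pi μ {x | |∑ k, a k * x k - u| ≤ t} ^ 2
      ≤ pairPi μ {y | |∑ k, a k * pairDiff y k| ≤ 2 * t} := by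
  set B := {x : ι → ℝ | |∑ k, a k * x k - u| ≤ t}
  have hB : MeasurableSet B := measurableSet_le (by fun_prop) measurable_const
  have hpair := measurePreserving_arrowProdEquivProdArrow ℝ ℝ ι μ μ
  calc Measure.pi μ B ^ 2
      = pairPi μ (MeasurableEquiv.arrowProdEquivProdArrow ℝ ℝ ι ⁻¹' B ×ˢ B) := by
        rw [hpair.measure_preimage (hB.prod hB).nullMeasurableSet, Measure.prod_prod, sq]
    _ ≤ pairPi μ {y | |∑ k, a k * pairDiff y k| ≤ 2 * t} := by
        refine measure_mono fun y ⟨hy₁, hy₂⟩ => ?_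
        change |∑ k, a k * (y k).1 - u| ≤ t at hy₁
        change |∑ k, a k * (y k).2 - u| ≤ t at hy₂
        have hdiff : ∑ k, a k * pairDiff y k
            = (∑ k, a k * (y k).1 - u) - (∑ k, a k * (y k).2 - u) := by
          simp only [pairDiff, mul_sub, sum_sub_distrib]
          ring
        rw [Set.mem_ofPred_eq, hdiff]
        exact (abs_sub _ _).trans (by linarith)

/-- Swapping the two members of the `k`-th pair, for each `k` with `s k = false`, preserves
`pairPi μ` and flips the sign of the `k`-th difference. -/
lemma pairPi_boolSign_mul_pairDiff_mem (s : ι → Bool) {B : Set (ι → ℝ)} (hB : MeasurableSet B) :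
    pairPi μ {y | (fun k => boolSign (s k) * pairDiff y k) ∈ B}
      = pairPi μ {y | pairDiff y ∈ B} := by
  set swap := fun k (z : ℝ × ℝ) => if s k then z else z.swap
  have hswap : MeasurePreserving (fun y k => swap k (y k)) (pairPi μ) (pairPi μ) := by
    refine measurePreserving_pi _ _ fun k => ?_
    by_cases h : s k
    · simp only [swap, h, if_true]
      exact MeasurePreserving.id _
    · simpa [swap, h] using Measure.measurePreserving_swap
  have hpre : {y | (fun k => boolSign (s k) * pairDiff y k) ∈ B}
      = (fun y k => swap k (y k)) ⁻¹' {y | pairDiff y ∈ B} := by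
    ext y
    simp only [Set.mem_ofPred_eq, Set.mem_preimage]
    congr! 2 with k
    by_cases h : s k <;> simp [swap, h, boolSign, pairDiff]
  rw [hpre]
  exact hswap.measure_preimage (measurable_pairDiff hB).nullMeasurableSet

lemma ofReal_le_pairPi_one_lt_abs_pairDiff {p : ℝ} (hp1 : p ≤ 1)
    (hμ : ∀ k u, μ k {x | |x - u| ≤ 1} ≤ ENNReal.ofReal (1 - p)) (k : ι) :
    ENNReal.ofReal p ≤ pairPi μ {y | 1 < |pairDiff y k|} := by
  have hS : MeasurableSet {z : ℝ × ℝ | |z.1 - z.2| ≤ 1} :=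
    measurableSet_le (by fun_prop) measurable_const
  have hpre : {y | 1 < |pairDiff y k|} = Function.eval k ⁻¹' {z : ℝ × ℝ | |z.1 - z.2| ≤ 1}ᶜ := by
    ext y
    simp [pairDiff]
  rw [hpre, (measurePreserving_eval _ k).measure_preimage hS.compl.nullMeasurableSet,
    prob_compl_eq_one_sub hS, ← ENNReal.ofReal_one,
    show ENNReal.ofReal p = ENNReal.ofReal 1 - ENNReal.ofReal (1 - p) by
      rw [← ENNReal.ofReal_sub _ (by linarith), sub_sub_cancel]]
  exact tsub_le_tsub_left (prod_abs_sub_le_le (hμ k)) _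

lemma ofReal_half_le_pairPi_half_le_sum_sq {p : ℝ} (hp0 : 0 ≤ p) (hp1 : p ≤ 1)
    (hμ : ∀ k u, μ k {x | |x - u| ≤ 1} ≤ ENNReal.ofReal (1 - p)) {a : ι → ℝ}
    (ha : ∑ k, a k ^ 2 = 1) :
    ENNReal.ofReal (p / 2) ≤ pairPi μ {y | p / 2 ≤ ∑ k, (a k * pairDiff y k) ^ 2} := by
  set E := fun k => {y : ι → ℝ × ℝ | 1 < |pairDiff y k|}
  have hE : ∀ k, MeasurableSet (E k) := fun k => measurableSet_lt measurable_const (by fun_prop)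
  set Z := fun y => ∑ k, (E k).indicator (fun _ => a k ^ 2) y
  have hZ1 : ∀ y, Z y ≤ 1 := fun y => ha ▸ sum_le_sum fun k _ =>
    Set.indicator_le_self' (fun _ _ => sq_nonneg (a k)) y
  have hlintegral : ENNReal.ofReal p ≤ ∫⁻ y, ENNReal.ofReal (Z y) ∂pairPi μ :=
    calc ENNReal.ofReal p = ∑ k, ENNReal.ofReal (a k ^ 2) * ENNReal.ofReal p := by
          rw [← sum_mul, ← ENNReal.ofReal_sum_of_nonneg fun k _ => sq_nonneg (a k), ha,
            ENNReal.ofReal_one, one_mul]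
      _ ≤ ∑ k, ENNReal.ofReal (a k ^ 2) * pairPi μ (E k) := by
          gcongr with k
          exact ofReal_le_pairPi_one_lt_abs_pairDiff μ hp1 hμ k
      _ = ∫⁻ y, ∑ k, (E k).indicator (fun _ => ENNReal.ofReal (a k ^ 2)) y ∂pairPi μ := by
          rw [lintegral_finsetSum _ fun k _ => measurable_const.indicator (hE k)]
          exact sum_congr rfl fun k _ => (lintegral_indicator_const (hE k) _).symm
      _ = ∫⁻ y, ENNReal.ofReal (Z y) ∂pairPi μ := by
          refine lintegral_congr fun y => ?_
          rw [ENNReal.ofReal_sum_of_nonneg fun k _ =>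
            Set.indicator_nonneg (fun _ _ => sq_nonneg (a k)) _]
          refine sum_congr rfl fun k _ => ?_
          by_cases h : y ∈ E k <;> simp [h]
  refine (ofReal_half_le_measure_half_le _
    (Finset.measurable_sum _ fun k _ => measurable_const.indicator (hE k)) hZ1 hp0
    hlintegral).trans (measure_mono fun y (hy : p / 2 ≤ Z y) => hy.trans (sum_le_sum fun k _ => ?_))
  by_cases hk : y ∈ E k
  · rw [Set.indicator_of_mem hk, mul_pow]
    have : 1 ≤ pairDiff y k ^ 2 := by nlinarith [sq_abs (pairDiff y k), hk.out]
    nlinarith [sq_nonneg (a k)]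
  · rw [Set.indicator_of_notMem hk]
    positivity

lemma pairPi_abs_sum_mul_pairDiff_le [DecidableEq ι] {p t : ℝ} (hp1 : p ≤ 1)
    (ht : t ^ 2 < p / 8) (hμ : ∀ k u, μ k {x | |x - u| ≤ 1} ≤ ENNReal.ofReal (1 - p))
    {a : ι → ℝ} (ha : ∑ k, a k ^ 2 = 1) :
    pairPi μ {y | |∑ k, a k * pairDiff y k| ≤ t} ≤ ENNReal.ofReal (1 - 3 * p / 32) := by
  have hp : 0 ≤ p := by nlinarith [sq_nonneg t]
  set G := {y | p / 2 ≤ ∑ k, (a k * pairDiff y k) ^ 2}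
  have hG : MeasurableSet G := measurableSet_le measurable_const (by fun_prop)
  set A := fun s : ι → Bool => {y | |signedSum univ (fun k => a k * pairDiff y k) s| ≤ t}
  have hA : ∀ s, MeasurableSet (A s) := fun s =>
    measurableSet_le (by unfold signedSum; fun_prop) measurable_const
  have hAB : ∀ s, pairPi μ (A s) = pairPi μ {y | |∑ k, a k * pairDiff y k| ≤ t} := fun s => by
    convert pairPi_boolSign_mul_pairDiff_mem μ s (B := {x | |∑ k, a k * x k| ≤ t})
      (measurableSet_le (by fun_prop) measurable_const) using 3 <;>
    simp [signedSum, mul_left_comm]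
  have hcount : ∀ y ∈ G, ∑ s, (A s).indicator 1 y + ENNReal.ofReal (3 / 16) *
      Fintype.card (ι → Bool) ≤ Fintype.card (ι → Bool) := by
    intro y hy
    have h16 := card_abs_signedSum_le_le (fun k => a k * pairDiff y k) (t := t)
      (by change p / 2 ≤ _ at hy; linarith)
    have hreal := (Nat.cast_le (α := ℝ)).mpr h16
    push_cast at hreal
    have hind : ∑ s, (A s).indicator 1 y
        = (#{s | |signedSum univ (fun k => a k * pairDiff y k) s| ≤ t} : ℝ≥0∞) := by
      simp only [card_filter, Nat.cast_sum, Nat.cast_ite, Nat.cast_one, Nat.cast_zero]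
      refine sum_congr rfl fun s _ => ?_
      simp [Set.indicator_apply, A]
    rw [hind, ← ENNReal.ofReal_natCast, ← ENNReal.ofReal_natCast (Fintype.card _),
      ← ENNReal.ofReal_mul (by norm_num), ← ENNReal.ofReal_add (by positivity) (by positivity)]
    exact ENNReal.ofReal_le_ofReal (by linarith)
  have hsum := measure_add_mul_measure_le_one (pairPi μ) hA hG hAB hcount
  rw [ENNReal.ofReal_sub _ (by positivity), ENNReal.ofReal_one]
  refine ENNReal.le_sub_of_add_le_right ENNReal.ofReal_ne_top (le_trans ?_ hsum)
  calc _ = _ + ENNReal.ofReal (3 / 16) * ENNReal.ofReal (p / 2) := by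
        rw [← ENNReal.ofReal_mul (by norm_num)]
        ring_nf
    _ ≤ _ := by gcongr; exact ofReal_half_le_pairPi_half_le_sum_sq μ hp hp1 hμ ha

end Symmetrization

theorem small_ball_simple_bound_general (p K : ℝ) (hp : 0 < p) :
    ∃ c c' : ℝ, 0 < c ∧ 0 < c' ∧
      ∀ (N : ℕ) (Ω : Type) (_ : MeasurableSpace Ω) (P : Measure Ω),
        IsProbabilityMeasure P →
        ∀ ξ : Ω → Fin N → ℝ,
          (∀ k, Measurable fun ω => ξ ω k) →
          iIndepFun (fun k ω => ξ ω k) P →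
          (∀ (k : Fin N) (u : ℝ), P {ω | |ξ ω k - u| ≤ 1} ≤ ENNReal.ofReal (1 - p)) →
          (∀ k : Fin N, P {ω | K < |ξ ω k|} ≤ ENNReal.ofReal (p / 2)) →
          ∀ a : Fin N → ℝ, (∑ k, a k ^ 2) = 1 →
            concFn P (fun ω => ∑ k, a k * ξ ω k) c ≤ ENNReal.ofReal (1 - c') := by
  set p' := min p 1
  have hp' : 0 < p' := lt_min hp one_pos
  have hp'1 : p' ≤ 1 := min_le_right p 1
  -- `(2c)² = p'/16 < p'/8` and `(1 - c')² ≥ 1 - 3p'/32`.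
  refine ⟨√p' / 8, 3 * p' / 64, by positivity, by positivity, ?_⟩
  intro N Ω _ P _ ξ hξ hindep hball _ a ha
  set μ : Fin N → Measure ℝ := fun k => P.map fun ω => ξ ω k
  have : ∀ k, IsProbabilityMeasure (μ k) := fun k =>
    Measure.isProbabilityMeasure_map (hξ k).aemeasurable
  have hlaw : P.map (fun ω k => ξ ω k) = Measure.pi μ :=
    hindep.map_fun_eq_pi_map fun k => (hξ k).aemeasurable
  have hμ : ∀ k u, μ k {x | |x - u| ≤ 1} ≤ ENNReal.ofReal (1 - p') := fun k u => by
    rw [Measure.map_apply (hξ k) (measurableSet_le (by fun_prop) measurable_const)]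
    exact (hball k u).trans (ENNReal.ofReal_le_ofReal (by linarith [min_le_left p 1]))
  refine iSup_le fun u => ?_
  have hsq : P {ω | ‖∑ k, a k * ξ ω k - u‖ ≤ √p' / 8} ^ 2
      ≤ ENNReal.ofReal (1 - 3 * p' / 32) := by
    set B := {x : Fin N → ℝ | |∑ k, a k * x k - u| ≤ √p' / 8}
    have hB : MeasurableSet B := measurableSet_le (by fun_prop) measurable_const
    change P ((fun ω k => ξ ω k) ⁻¹' B) ^ 2 ≤ _
    rw [← Measure.map_apply (measurable_pi_lambda _ hξ) hB, hlaw]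
    refine (pi_measure_abs_sum_sub_le_sq_le μ a u _).trans
      (pairPi_abs_sum_mul_pairDiff_le μ hp'1 ?_ hμ ha)
    rw [mul_pow, div_pow, Real.sq_sqrt hp'.le]
    linarith
  refine (ENNReal.pow_le_pow_left_iff two_ne_zero).mp (hsq.trans ?_)
  rw [← ENNReal.ofReal_pow (by linarith)]
  exact ENNReal.ofReal_le_ofReal (by nlinarith)

/-- **Small ball probabilities: a simple bound** (Rudelson–Vershynin, Lemma 7.8). -/
theorem small_ball_simple_bound (p K : ℝ) (hp : 0 < p) (hK : 0 < K) :
    ∃ c c' : ℝ, 0 < c ∧ 0 < c' ∧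
      ∀ (N : ℕ) (Ω : Type) (_ : MeasurableSpace Ω) (P : Measure Ω),
        IsProbabilityMeasure P →
        ∀ ξ : Ω → Fin N → ℝ,
          (∀ k, Measurable fun ω => ξ ω k) →
          iIndepFun (fun k ω => ξ ω k) P →
          (∀ (k : Fin N) (u : ℝ), P {ω | |ξ ω k - u| ≤ 1} ≤ ENNReal.ofReal (1 - p)) →
          (∀ k : Fin N, P {ω | K < |ξ ω k|} ≤ ENNReal.ofReal (p / 2)) →
          ∀ a : Fin N → ℝ, (∑ k, a k ^ 2) = 1 →
            concFn P (fun ω => ∑ k, a k * ξ ω k) c ≤ ENNReal.ofReal (1 - c') :=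
  small_ball_simple_bound_general p K hp
end
end
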